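/- arXiv:2002.03762 — 12 statements merged into one kernel-verified Lean document; each statement's English description precedes it below -/
import Mathlib

section
/- For every type A, A is equivalent to the conjunction of its multiset of prime factors, i.e., A ≡ ⋀ PF(A). -/
/-- Types: A ::= τ | A ⇒ A | A ∧ A -/
inductive Ty : Type
  | tau : Ty
  | imp : Ty → Ty → Ty
  | conj : Ty → Ty → Ty
  deriving DecidableEq

/-- Type equivalence ≡: smallest congruence with the four isomorphisms. -/
inductive TyEq : Ty → Ty → Prop
  | refl (A) : TyEq A A
  | symm {A B} : TyEq A B → TyEq B A
  | trans {A B C} : TyEq A B → TyEq B C → TyEq A C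
  | impCongr {A A' B B'} : TyEq A A' → TyEq B B' → TyEq (.imp A B) (.imp A' B')
  | conjCongr {A A' B B'} : TyEq A A' → TyEq B B' → TyEq (.conj A B) (.conj A' B')
  | comm (A B) : TyEq (.conj A B) (.conj B A)
  | assoc (A B C) : TyEq (.conj A (.conj B C)) (.conj (.conj A B) C)
  | dist (A B C) : TyEq (.imp A (.conj B C)) (.conj (.imp A B) (.imp A C))
  | curry (A B C) : TyEq (.imp (.conj A B) C) (.imp A (.imp B C))

/-- Add premise `a` to a prime factor: τ becomes a⇒τ (convention a∧∅ = a),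
    c⇒τ becomes (a∧c)⇒τ. -/
def addPrem (a : Ty) : Ty → Ty
  | .tau => .imp a .tau
  | .imp c .tau => .imp (.conj a c) .tau
  | t => t

/-- Multiset of prime factors. -/
def PF : Ty → Multiset Ty
  | .tau => {.tau}
  | .imp a b => (PF b).map (addPrem a)
  | .conj a b => PF a + PF b

/-- ⋀[A₁,...,Aₙ] -/
def bigConj : List Ty → Ty
  | [] => .tau
  | [a] => a
  | a :: b :: t => .conj a (bigConj (b :: t))

def IsPrime (t : Ty) : Prop := t = .tau ∨ ∃ c, t = .imp c .tau

lemma addPrem_prime (a : Ty) {p : Ty} (hp : IsPrime p) : IsPrime (addPrem a p) := by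
  rcases hp with h | ⟨c, h⟩ <;> subst h
  · exact Or.inr ⟨a, rfl⟩
  · exact Or.inr ⟨.conj a c, rfl⟩

lemma PF_prime : ∀ A, ∀ p ∈ PF A, IsPrime p := by
  intro A
  induction A with
  | tau => intro p hp; simp [PF] at hp; subst hp; exact Or.inl rfl
  | imp a b iha ihb =>
    intro p hp
    simp only [PF, Multiset.mem_map] at hp
    obtain ⟨q, hq, rfl⟩ := hp
    exact addPrem_prime a (ihb q hq)
  | conj a b iha ihb =>
    intro p hp
    simp only [PF, Multiset.mem_add] at hp
    rcases hp with h | h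
    · exact iha p h
    · exact ihb p h

lemma PF_ne_zero : ∀ A, PF A ≠ 0 := by
  intro A
  induction A with
  | tau => simp [PF]
  | imp a b iha ihb => simpa [PF] using ihb
  | conj a b iha ihb =>
    intro h
    have : PF a = 0 := by
      have := congrArg Multiset.card h
      simp only [PF, Multiset.card_add, Multiset.card_zero, Nat.add_eq_zero] at this
      exact Multiset.card_eq_zero.mp this.1
    exact iha this

lemma bigConj_cons (a : Ty) (l : List Ty) (hl : l ≠ []) :
    bigConj (a :: l) = .conj a (bigConj l) := by
  cases l with
  | nil => exact absurd rfl hl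
  | cons b t => rfl

lemma bigConj_append (la lb : List Ty) (ha : la ≠ []) (hb : lb ≠ []) :
    TyEq (.conj (bigConj la) (bigConj lb)) (bigConj (la ++ lb)) := by
  induction la with
  | nil => exact absurd rfl ha
  | cons a rest ih =>
    cases rest with
    | nil =>
      rw [show ([a] : List Ty) ++ lb = a :: lb from rfl, bigConj_cons a lb hb]
      exact TyEq.refl _
    | cons b t =>
      have hr : (b :: t : List Ty) ≠ [] := by simp
      rw [bigConj_cons a (b::t) hr]
      exact .trans (.symm (.assoc _ _ _)) (.conjCongr (.refl _) (ih hr))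

lemma bigConj_perm {l l' : List Ty} (h : l.Perm l') :
    TyEq (bigConj l) (bigConj l') := by
  induction h with
  | nil => exact .refl _
  | @cons x t₁ t₂ h ih =>
    cases t₁ with
    | nil => rw [h.symm.eq_nil]; exact .refl _
    | cons b t =>
      have h2 : t₂ ≠ [] := by
        intro e; subst e; exact absurd h.eq_nil (by simp)
      rw [bigConj_cons x (b::t) (by simp), bigConj_cons x t₂ h2]
      exact .conjCongr (.refl _) ih
  | swap a b l =>
    cases l with
    | nil => exact .comm _ _
    | cons x t =>
      rw [bigConj_cons b (a::x::t) (by simp), bigConj_cons a (x::t) (by simp),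
          bigConj_cons a (b::x::t) (by simp), bigConj_cons b (x::t) (by simp)]
      exact .trans (.assoc _ _ _)
        (.trans (.conjCongr (.comm _ _) (.refl _)) (.symm (.assoc _ _ _)))
  | trans _ _ ih1 ih2 => exact .trans ih1 ih2

lemma imp_prime (a : Ty) {p : Ty} (hp : IsPrime p) :
    TyEq (.imp a p) (addPrem a p) := by
  rcases hp with h | ⟨c, h⟩ <;> subst h
  · exact .refl _
  · exact .symm (.curry _ _ _)

lemma imp_bigConj (a : Ty) (l : List Ty) (hl : l ≠ []) (hp : ∀ p ∈ l, IsPrime p) :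
    TyEq (.imp a (bigConj l)) (bigConj (l.map (addPrem a))) := by
  induction l with
  | nil => exact absurd rfl hl
  | cons p rest ih =>
    cases rest with
    | nil => exact imp_prime a (hp p (by simp))
    | cons b t =>
      rw [bigConj_cons p (b::t) (by simp), List.map_cons,
          bigConj_cons (addPrem a p) (List.map (addPrem a) (b::t)) (by simp)]
      exact .trans (.dist _ _ _)
        (.conjCongr (imp_prime a (hp p (by simp)))
          (ih (by simp) (fun q hq => hp q (by simp [hq]))))

/-- Lemma 1: A ≡ ⋀ PF(A), for any listing of the multiset PF(A). -/
theorem eq_conj_PF (A : Ty) (l : List Ty) (h : PF A = (l : Multiset Ty)) :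
    TyEq A (bigConj l) := by
  induction A generalizing l with
  | tau =>
    have : ({Ty.tau} : Multiset Ty) = (l : Multiset Ty) := h
    have hp : [Ty.tau].Perm l := by
      rw [← Multiset.coe_eq_coe]; exact this
    rw [(List.perm_singleton.mp hp.symm)]
    exact .refl _
  | imp a b iha ihb =>
    set lb := (PF b).toList with hlb
    have hcb : PF b = (lb : Multiset Ty) := ((PF b).coe_toList).symm
    have h1 : TyEq b (bigConj lb) := ihb lb hcb
    have hne : lb ≠ [] := by
      intro e
      apply PF_ne_zero b
      rw [hcb, e]; rfl
    have h2 : TyEq (.imp a b) (bigConj (lb.map (addPrem a))) :=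
      .trans (.impCongr (.refl _) h1)
        (imp_bigConj a lb hne (fun p hp => PF_prime b p (by rw [hcb]; exact_mod_cast hp)))
    have hperm : (lb.map (addPrem a)).Perm l := by
      rw [← Multiset.coe_eq_coe, ← h]
      show ((lb : Multiset Ty).map (addPrem a)) = PF (.imp a b)
      rw [← hcb]; rfl
    exact .trans h2 (bigConj_perm hperm)
  | conj a b iha ihb =>
    set la := (PF a).toList
    set lb := (PF b).toList
    have hca : PF a = (la : Multiset Ty) := ((PF a).coe_toList).symm
    have hcb : PF b = (lb : Multiset Ty) := ((PF b).coe_toList).symm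
    have hna : la ≠ [] := fun e => PF_ne_zero a (by rw [hca, e]; rfl)
    have hnb : lb ≠ [] := fun e => PF_ne_zero b (by rw [hcb, e]; rfl)
    have h2 : TyEq (.conj a b) (bigConj (la ++ lb)) :=
      .trans (.conjCongr (iha la hca) (ihb lb hcb)) (bigConj_append la lb hna hnb)
    have hperm : (la ++ lb).Perm l := by
      rw [← Multiset.coe_eq_coe, ← h]
      show ((la : Multiset Ty) + lb) = PF (.conj a b)
      rw [← hca, ← hcb]; rfl
    exact .trans h2 (bigConj_perm hperm)
end

section
/- If A ≡ B, then the multisets of prime factors PF(A) and PF(B) are equal up to pointwise equivalence: there is a bijection between them matching each element with an equivalent one. -/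
/-- prime factor shape -/
def isPF (x : Ty) : Prop := x = .tau ∨ ∃ c, x = .imp c .tau

lemma isPF_addPrem (a : Ty) {x : Ty} (h : isPF x) : isPF (addPrem a x) := by
  rcases h with rfl | ⟨c, rfl⟩ <;> simp [addPrem, isPF]

lemma mem_PF_isPF : ∀ (t : Ty) {x : Ty}, x ∈ PF t → isPF x := by
  intro t
  induction t with
  | tau => intro x hx; simp [PF] at hx; subst hx; left; rfl
  | imp a b iha ihb =>
      intro x hx
      simp [PF] at hx
      obtain ⟨y, hy, rfl⟩ := hx
      exact isPF_addPrem a (ihb hy)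
  | conj a b iha ihb =>
      intro x hx
      rcases Multiset.mem_add.1 hx with h | h
      · exact iha h
      · exact ihb h

lemma addPrem_equiv (a : Ty) {x : Ty} (h : isPF x) :
    TyEq (addPrem a x) (.imp a x) := by
  rcases h with rfl | ⟨c, rfl⟩
  · exact TyEq.refl _
  · exact TyEq.curry a c .tau

lemma addPrem_congr {a a' x y : Ty} (hx : isPF x) (hy : isPF y)
    (ha : TyEq a a') (hxy : TyEq x y) :
    TyEq (addPrem a x) (addPrem a' y) :=
  ((addPrem_equiv a hx).trans (TyEq.impCongr ha hxy)).trans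
    (addPrem_equiv a' hy).symm

lemma rel_map_addPrem {a a' : Ty} (ha : TyEq a a') :
    ∀ {s t : Multiset Ty}, Multiset.Rel TyEq s t →
      (∀ x ∈ s, isPF x) → (∀ y ∈ t, isPF y) →
      Multiset.Rel TyEq (s.map (addPrem a)) (t.map (addPrem a')) := by
  intro s t h
  induction h with
  | zero => intro _ _; simp
  | @cons x y s t hxy hst ih =>
      intro hs ht
      simp only [Multiset.map_cons]
      exact Multiset.Rel.cons
        (addPrem_congr (hs x (by simp)) (ht y (by simp)) ha hxy)
        (ih (fun z hz => hs z (by simp [hz])) (fun z hz => ht z (by simp [hz])))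

instance : IsTrans Ty TyEq := ⟨fun _ _ _ => TyEq.trans⟩

/-- Lemma 2: if A ≡ B then PF(A) ∼ PF(B) (multisets equal up to pointwise ≡). -/
theorem eq_PF (A B : Ty) (h : TyEq A B) : Multiset.Rel TyEq (PF A) (PF B) := by
  induction h with
  | refl A => exact Multiset.rel_refl_of_refl_on (fun x _ => TyEq.refl x)
  | symm h ih => exact (Multiset.rel_flip.2 ih).mono (fun _ _ _ _ h => h.symm)
  | trans h1 h2 ih1 ih2 => exact Multiset.Rel.trans TyEq ih1 ih2
  | impCongr ha hb iha ihb =>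
      exact rel_map_addPrem ha ihb (fun x hx => mem_PF_isPF _ hx)
        (fun y hy => mem_PF_isPF _ hy)
  | conjCongr ha hb iha ihb => exact iha.add ihb
  | comm A B =>
      show Multiset.Rel TyEq (PF A + PF B) (PF B + PF A)
      rw [add_comm]
      exact Multiset.rel_refl_of_refl_on (fun x _ => TyEq.refl x)
  | assoc A B C =>
      show Multiset.Rel TyEq (PF A + (PF B + PF C)) (PF A + PF B + PF C)
      rw [add_assoc]
      exact Multiset.rel_refl_of_refl_on (fun x _ => TyEq.refl x)
  | dist A B C =>
      show Multiset.Rel TyEq ((PF B + PF C).map (addPrem A))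
        ((PF B).map (addPrem A) + (PF C).map (addPrem A))
      rw [Multiset.map_add]
      exact Multiset.rel_refl_of_refl_on (fun x _ => TyEq.refl x)
  | curry A B C =>
      show Multiset.Rel TyEq ((PF C).map (addPrem (.conj A B)))
        (((PF C).map (addPrem B)).map (addPrem A))
      rw [Multiset.map_map]
      rw [Multiset.rel_map]
      refine Multiset.rel_refl_of_refl_on ?_
      intro x hx
      have hpf := mem_PF_isPF C hx
      have h1 : TyEq (addPrem (.conj A B) x) (.imp (.conj A B) x) :=
        addPrem_equiv _ hpf
      have h2 : TyEq (.imp (.conj A B) x) (.imp A (.imp B x)) := TyEq.curry _ _ _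
      have h3 : TyEq (.imp A (.imp B x)) (.imp A (addPrem B x)) :=
        TyEq.impCongr (TyEq.refl A) (addPrem_equiv B hpf).symm
      have h4 : TyEq (.imp A (addPrem B x)) (addPrem A (addPrem B x)) :=
        (addPrem_equiv A (isPF_addPrem B hpf)).symm
      exact ((h1.trans h2).trans h3).trans h4
end

section
/- The measure m on types is invariant under type equivalence: if A ≡ B then m(A) = m(B). -/
/-- `m` is a measure of types in the sense of Definition 4 of the paper:
m(A) = Σᵢ (m(Cᵢ)+1) where PF(A) = [Cᵢ⇒τ]ᵢ, a factor τ being read as ∅⇒τ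
and contributing m(∅)+1 = 1. -/
def IsMeasure (m : Ty → ℕ) : Prop :=
  ∀ A : Ty, m A = ((PF A).map (fun p =>
      match p with
      | .imp c .tau => m c + 1
      | .tau => 1
      | _ => 0)).sum

/-- weight of a prime factor -/
def pw (m : Ty → ℕ) (p : Ty) : ℕ :=
  match p with
  | .imp c .tau => m c + 1
  | .tau => 1
  | _ => 0

lemma PF_shape : ∀ A, ∀ p ∈ PF A, p = .tau ∨ ∃ c, p = .imp c .tau := by
  intro A
  induction A with
  | tau => intro p hp; simp [PF] at hp; left; exact hp
  | imp a b iha ihb =>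
      intro p hp
      simp only [PF, Multiset.mem_map] at hp
      obtain ⟨q, hq, rfl⟩ := hp
      rcases ihb q hq with rfl | ⟨c, rfl⟩
      · right; exact ⟨a, rfl⟩
      · right; exact ⟨.conj a c, rfl⟩
  | conj a b iha ihb =>
      intro p hp
      simp only [PF, Multiset.mem_add] at hp
      rcases hp with hp | hp
      · exact iha p hp
      · exact ihb p hp

lemma m_sum (m : Ty → ℕ) (hm : IsMeasure m) (A : Ty) :
    m A = ((PF A).map (pw m)).sum := hm A

lemma m_conj (m : Ty → ℕ) (hm : IsMeasure m) (a b : Ty) :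
    m (.conj a b) = m a + m b := by
  rw [m_sum m hm (.conj a b), m_sum m hm a, m_sum m hm b]
  simp [PF]

lemma m_imp (m : Ty → ℕ) (hm : IsMeasure m) (a b : Ty) :
    m (.imp a b) = (PF b).card * m a + m b := by
  rw [m_sum m hm (.imp a b), m_sum m hm b]
  show (((PF b).map (addPrem a)).map (pw m)).sum = _
  rw [Multiset.map_map]
  have hcongr : ((PF b).map (pw m ∘ addPrem a)).sum
      = ((PF b).map (fun p => m a + pw m p)).sum := by
    apply congrArg
    apply Multiset.map_congr rfl
    intro p hp
    rcases PF_shape b p hp with rfl | ⟨c, rfl⟩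
    · simp [addPrem, pw]
    · simp [addPrem, pw, m_conj m hm a c, Nat.add_assoc]
  rw [hcongr, Multiset.sum_map_add]
  simp [Multiset.map_const', mul_comm]

lemma card_PF_eq {A B : Ty} (h : TyEq A B) : (PF A).card = (PF B).card := by
  induction h with
  | refl => rfl
  | symm _ ih => exact ih.symm
  | trans _ _ ih1 ih2 => exact ih1.trans ih2
  | impCongr _ _ _ ih2 => simpa [PF] using ih2
  | conjCongr _ _ ih1 ih2 => simp [PF, ih1, ih2]
  | comm A B => simp [PF, Nat.add_comm]
  | assoc A B C => simp [PF, Nat.add_assoc]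
  | dist A B C => simp [PF]
  | curry A B C => simp [PF]

theorem m_eq_of_tyEq (m : Ty → ℕ) (hm : IsMeasure m) (A B : Ty)
    (h : TyEq A B) : m A = m B := by
  induction h with
  | refl => rfl
  | symm _ ih => exact ih.symm
  | trans _ _ ih1 ih2 => exact ih1.trans ih2
  | impCongr h1 h2 ih1 ih2 =>
      rw [m_imp m hm, m_imp m hm, ih1, ih2, card_PF_eq h2]
  | conjCongr _ _ ih1 ih2 =>
      rw [m_conj m hm, m_conj m hm, ih1, ih2]
  | comm A B => rw [m_conj m hm, m_conj m hm, Nat.add_comm]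
  | assoc A B C =>
      simp [m_conj m hm, Nat.add_assoc]
  | dist A B C =>
      simp [m_conj m hm, m_imp m hm, PF]
      ring
  | curry A B C =>
      simp [m_conj m hm, m_imp m hm, PF]
      ring
end

section
/- If A⇒B ≡ C⇒τ, then either (A ≡ C and B ≡ τ), or there exists B' such that C ≡ A∧B' and B ≡ B'⇒τ. -/
/-!
Every type is equivalent to a conjunction of *prime* types `τ` and `(P₁ ∧ ⋯ ∧ Pₙ) ⇒ τ`.
Recording the premises of each prime factor as the multiset of their own normal forms
gives a multiset-valued invariant `nf` of `≡` which, read back as a conjunction, is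
equivalent to the type itself. Since `C ⇒ τ` has exactly one prime factor, so does
`A ⇒ B`; hence `B` is a single prime, with some multiset `s` of premises, and comparing
the premises of the two sides gives `nf C = nf A + s`.
-/

namespace Ty

instance : Trans TyEq TyEq TyEq := ⟨TyEq.trans⟩

def IsConj : Ty → Prop
  | conj _ _ => True
  | _ => False

def conjList : List Ty → Ty
  | [] => tau
  | [a] => a
  | a :: l => conj a (conjList l)

def conjuncts : Ty → List Ty
  | conj a b => a :: conjuncts b
  | t => [t]

theorem conjList_cons_of_ne_nil (a : Ty) {l : List Ty} (hl : l ≠ []) :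
    conjList (a :: l) = conj a (conjList l) := by
  obtain ⟨b, m, rfl⟩ := List.exists_cons_of_ne_nil hl
  rfl

theorem conjList_append {l m : List Ty} (hl : l ≠ []) (hm : m ≠ []) :
    TyEq (conjList (l ++ m)) (conj (conjList l) (conjList m)) := by
  induction l with
  | nil => contradiction
  | cons a l ih =>
    rcases eq_or_ne l [] with rfl | hl'
    · rw [List.singleton_append, conjList_cons_of_ne_nil a hm]
      exact .refl _
    · rw [List.cons_append, conjList_cons_of_ne_nil a (by simp [hl']),
        conjList_cons_of_ne_nil a hl']
      exact (TyEq.conjCongr (.refl a) (ih hl')).trans (.assoc _ _ _)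

theorem conjList_perm {l m : List Ty} (h : l.Perm m) : TyEq (conjList l) (conjList m) := by
  induction h with
  | nil => exact .refl _
  | @cons a l₁ l₂ h ih =>
    rcases eq_or_ne l₁ [] with rfl | hl₁
    · rw [List.nil_perm.mp h]
      exact .refl _
    · have hl₂ : l₂ ≠ [] := fun h₂ => hl₁ (h₂ ▸ h).eq_nil
      rw [conjList_cons_of_ne_nil a hl₁, conjList_cons_of_ne_nil a hl₂]
      exact .conjCongr (.refl a) ih
  | swap a b l =>
    rcases eq_or_ne l [] with rfl | hl
    · exact .comm b a
    · simp only [conjList_cons_of_ne_nil _ hl, conjList_cons_of_ne_nil _ (List.cons_ne_nil _ _)]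
      calc TyEq (conj b (conj a (conjList l))) (conj (conj b a) (conjList l)) := .assoc _ _ _
        TyEq _ (conj (conj a b) (conjList l)) := .conjCongr (.comm b a) (.refl _)
        TyEq _ (conj a (conj b (conjList l))) := (TyEq.assoc _ _ _).symm
  | trans _ _ ih₁ ih₂ => exact ih₁.trans ih₂

theorem conjuncts_ne_nil (t : Ty) : conjuncts t ≠ [] := by
  cases t <;> simp [conjuncts]

theorem conjList_conjuncts (t : Ty) : conjList (conjuncts t) = t := by
  induction t with
  | conj a b _ ihb => rw [conjuncts, conjList_cons_of_ne_nil a (conjuncts_ne_nil b), ihb]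
  | _ => rfl

theorem conjuncts_conjList {l : List Ty} (hl : l ≠ []) (h : ∀ x ∈ l, ¬ x.IsConj) :
    conjuncts (conjList l) = l := by
  induction l with
  | nil => contradiction
  | cons a l ih =>
    rcases eq_or_ne l [] with rfl | hl'
    · cases a with
      | conj => exact absurd trivial (h _ (List.mem_singleton_self _))
      | _ => rfl
    · rw [conjList_cons_of_ne_nil a hl', conjuncts, ih hl' fun x hx => h x (by simp [hx])]

/-- `Multiset.toList` fixes one order of each multiset, so `conjOf` is a function of the
multiset while any other order gives an equivalent type (`conjOf_coe`). -/
noncomputable def conjOf (s : Multiset Ty) : Ty := conjList s.toList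

theorem conjOf_coe (l : List Ty) : TyEq (conjOf l) (conjList l) :=
  conjList_perm (Multiset.coe_eq_coe.mp (Multiset.coe_toList _))

theorem conjOf_singleton (a : Ty) : conjOf {a} = a := by
  simp [conjOf, conjList]

theorem conjOf_add {s t : Multiset Ty} (hs : s ≠ 0) (ht : t ≠ 0) :
    TyEq (conjOf (s + t)) (conj (conjOf s) (conjOf t)) := by
  have h := conjOf_coe (s.toList ++ t.toList)
  rw [← Multiset.coe_add, Multiset.coe_toList, Multiset.coe_toList] at h
  exact h.trans (conjList_append (by simpa using hs) (by simpa using ht))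

theorem imp_conjList {a : Ty} {l : List Ty} (f : Ty → Ty) (hf : ∀ p ∈ l, TyEq (imp a p) (f p))
    (hl : l ≠ []) : TyEq (imp a (conjList l)) (conjList (l.map f)) := by
  induction l with
  | nil => contradiction
  | cons p l ih =>
    rcases eq_or_ne l [] with rfl | hl'
    · exact hf p (List.mem_singleton_self p)
    · rw [conjList_cons_of_ne_nil p hl', List.map_cons,
        conjList_cons_of_ne_nil _ (by simpa using hl')]
      exact (TyEq.dist _ _ _).trans
        (.conjCongr (hf p (by simp)) (ih (fun q hq => hf q (by simp [hq])) hl'))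

noncomputable def prime (s : Multiset Ty) : Ty := if s = 0 then tau else imp (conjOf s) tau

def premises : Ty → Multiset Ty
  | imp x tau => conjuncts x
  | _ => 0

def IsPrime (p : Ty) : Prop := ∃ s : Multiset Ty, (∀ x ∈ s, ¬ x.IsConj) ∧ prime s = p

theorem prime_zero : prime 0 = tau := if_pos rfl

theorem prime_of_ne_zero {s : Multiset Ty} (hs : s ≠ 0) : prime s = imp (conjOf s) tau :=
  if_neg hs

theorem premises_prime {s : Multiset Ty} (h : ∀ x ∈ s, ¬ x.IsConj) : premises (prime s) = s := by
  rcases eq_or_ne s 0 with rfl | hs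
  · rfl
  · rw [prime_of_ne_zero hs, premises, conjOf,
      conjuncts_conjList (by simpa using hs) (by simpa using h), Multiset.coe_toList]

theorem IsPrime.not_isConj {p : Ty} (hp : IsPrime p) : ¬ p.IsConj := by
  obtain ⟨s, -, rfl⟩ := hp
  rcases eq_or_ne s 0 with rfl | hs
  · rw [prime_zero]; exact id
  · rw [prime_of_ne_zero hs]; exact id

theorem IsPrime.not_isConj_of_mem_premises {p x : Ty} (hp : IsPrime p) (hx : x ∈ premises p) :
    ¬ x.IsConj := by
  obtain ⟨s, hs, rfl⟩ := hp
  exact hs x (premises_prime hs ▸ hx)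

theorem imp_prime {u s : Multiset Ty} (hu : u ≠ 0) :
    TyEq (imp (conjOf u) (prime s)) (prime (u + s)) := by
  rcases eq_or_ne s 0 with rfl | hs
  · rw [prime_zero, add_zero, prime_of_ne_zero hu]
    exact .refl _
  · rw [prime_of_ne_zero hs, prime_of_ne_zero (by simp [hu])]
    exact (TyEq.curry _ _ _).symm.trans (.impCongr (conjOf_add hu hs).symm (.refl _))

noncomputable def nf : Ty → Multiset Ty
  | tau => {tau}
  | imp a b => (nf b).map fun p => prime (nf a + premises p)
  | conj a b => nf a + nf b

theorem nf_ne_zero (t : Ty) : nf t ≠ 0 := by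
  induction t <;> simp [nf, *]

theorem isPrime_of_mem_nf {t p : Ty} (hp : p ∈ nf t) : IsPrime p := by
  induction t generalizing p with
  | tau =>
    rw [nf, Multiset.mem_singleton] at hp
    exact ⟨0, by simp, hp ▸ prime_zero⟩
  | imp a b iha ihb =>
    obtain ⟨q, hq, rfl⟩ := Multiset.mem_map.mp hp
    refine ⟨_, fun x hx => ?_, rfl⟩
    rcases Multiset.mem_add.mp hx with hx | hx
    · exact (iha hx).not_isConj
    · exact (ihb hq).not_isConj_of_mem_premises hx
  | conj a b iha ihb => exact (Multiset.mem_add.mp hp).elim iha ihb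

theorem premises_prime_nf_add (a : Ty) {p : Ty} (hp : IsPrime p) :
    premises (prime (nf a + premises p)) = nf a + premises p :=
  premises_prime fun _ hx => (Multiset.mem_add.mp hx).elim
    (fun hx => (isPrime_of_mem_nf hx).not_isConj) hp.not_isConj_of_mem_premises

theorem nf_eq_of_tyEq {A B : Ty} (h : TyEq A B) : nf A = nf B := by
  induction h with
  | refl => rfl
  | symm _ ih => exact ih.symm
  | trans _ _ ih₁ ih₂ => exact ih₁.trans ih₂
  | impCongr _ _ ih₁ ih₂ | conjCongr _ _ ih₁ ih₂ => simp only [nf, ih₁, ih₂]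
  | comm => exact add_comm _ _
  | assoc => exact (add_assoc _ _ _).symm
  | dist => exact Multiset.map_add _ _ _
  | curry a b c =>
    simp only [nf, Multiset.map_map, Function.comp_def]
    refine Multiset.map_congr rfl fun p hp => ?_
    rw [premises_prime_nf_add b (isPrime_of_mem_nf hp), add_assoc]

theorem tyEq_conjOf_nf (t : Ty) : TyEq t (conjOf (nf t)) := by
  induction t with
  | tau => rw [nf, conjOf_singleton]; exact .refl _
  | imp a b iha ihb =>
    set f := fun p => prime (nf a + premises p)
    have hf : ∀ p ∈ (nf b).toList, TyEq (imp (conjOf (nf a)) p) (f p) := by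
      intro p hp
      obtain ⟨s, hs, rfl⟩ := isPrime_of_mem_nf (Multiset.mem_toList.mp hp)
      simpa only [f, premises_prime hs] using imp_prime (nf_ne_zero a)
    have hmap := conjOf_coe ((nf b).toList.map f)
    rw [← Multiset.map_coe, Multiset.coe_toList] at hmap
    calc TyEq (imp a b) (imp (conjOf (nf a)) (conjList (nf b).toList)) := .impCongr iha ihb
      TyEq _ (conjList ((nf b).toList.map f)) :=
        imp_conjList f hf (by simpa using nf_ne_zero b)
      TyEq _ (conjOf (nf (imp a b))) := hmap.symm
  | conj a b iha ihb =>
    exact (TyEq.conjCongr iha ihb).trans (conjOf_add (nf_ne_zero a) (nf_ne_zero b)).symm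

end Ty

open Ty in
/-- Lemma 6 (imp vs prime imp). -/
theorem imp_imp (A B C : Ty) (h : TyEq (.imp A B) (.imp C .tau)) :
    (TyEq A C ∧ TyEq B .tau) ∨
    (∃ B' : Ty, TyEq C (.conj A B') ∧ TyEq B (.imp B' .tau)) := by
  have hnf : (nf B).map (fun p => prime (nf A + premises p)) = {prime (nf C)} := by
    simpa [nf, premises] using nf_eq_of_tyEq h
  obtain ⟨p, hB, hp⟩ := Multiset.map_eq_singleton.mp hnf
  obtain ⟨s, hs, rfl⟩ := isPrime_of_mem_nf (by simp [hB] : p ∈ nf B)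
  have hBs : TyEq B (prime s) := by simpa [hB, conjOf_singleton] using tyEq_conjOf_nf B
  have hC : nf A + s = nf C := by
    have := congrArg premises hp
    rwa [premises_prime_nf_add A ⟨s, hs, rfl⟩, premises_prime hs,
      premises_prime fun _ hx => (isPrime_of_mem_nf hx).not_isConj] at this
  rcases eq_or_ne s 0 with rfl | hs₀
  · rw [add_zero] at hC
    refine .inl ⟨?_, prime_zero ▸ hBs⟩
    exact (tyEq_conjOf_nf A).trans (hC ▸ (tyEq_conjOf_nf C).symm)
  · refine .inr ⟨conjOf s, ?_, prime_of_ne_zero hs₀ ▸ hBs⟩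
    calc TyEq C (conjOf (nf A + s)) := hC ▸ tyEq_conjOf_nf C
      TyEq _ (conj A (conjOf s)) :=
        (conjOf_add (nf_ne_zero A) hs₀).trans (.conjCongr (tyEq_conjOf_nf A).symm (.refl _))
end

section
/- Cancellation of conjunction on the left: if A∧B ≡ A∧C, then B ≡ C. -/
/-! ### Auxiliary development -/

/-- Prime shape: τ or c ⇒ τ. -/
def PrimeShape (t : Ty) : Prop := t = .tau ∨ ∃ c, t = .imp c .tau

lemma addPrem_prime_s9 {a t : Ty} (h : PrimeShape t) : PrimeShape (addPrem a t) := by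
  rcases h with rfl | ⟨c, rfl⟩
  · exact .inr ⟨a, rfl⟩
  · exact .inr ⟨.conj a c, rfl⟩

lemma PF_prime_s9 : ∀ (A : Ty) (t : Ty), t ∈ PF A → PrimeShape t := by
  intro A
  induction A with
  | tau => intro t ht; simp [PF] at ht; exact .inl ht
  | imp a b iha ihb =>
    intro t ht
    simp only [PF, Multiset.mem_map] at ht
    obtain ⟨u, hu, rfl⟩ := ht
    exact addPrem_prime_s9 (ihb u hu)
  | conj a b iha ihb =>
    intro t ht
    simp only [PF, Multiset.mem_add] at ht
    rcases ht with h | h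
    · exact iha t h
    · exact ihb t h

lemma addPrem_eq_imp {a t : Ty} (h : PrimeShape t) : TyEq (addPrem a t) (.imp a t) := by
  rcases h with rfl | ⟨c, rfl⟩
  · exact .refl _
  · exact .curry a c .tau

lemma addPrem_congr_s9 {a a' t t' : Ty} (ht : PrimeShape t) (ht' : PrimeShape t')
    (h1 : TyEq a a') (h2 : TyEq t t') : TyEq (addPrem a t) (addPrem a' t') :=
  ((addPrem_eq_imp ht).trans (.impCongr h1 h2)).trans (addPrem_eq_imp ht').symm

instance tySetoid : Setoid Ty :=
  ⟨TyEq, ⟨TyEq.refl, TyEq.symm, TyEq.trans⟩⟩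

abbrev TyQ := Quotient tySetoid

def PFQ (A : Ty) : Multiset TyQ := (PF A).map (Quotient.mk tySetoid)

lemma rel_of_pfq_eq {A B : Ty} (h : PFQ A = PFQ B) : Multiset.Rel TyEq (PF A) (PF B) := by
  have : Multiset.Rel (· = ·) (PFQ A) (PFQ B) := Multiset.rel_eq.mpr h
  have := Multiset.rel_map.mp this
  exact this.mono (fun a _ b _ hab => Quotient.exact hab)

lemma pfq_eq_of_rel {A B : Ty} (h : Multiset.Rel TyEq (PF A) (PF B)) : PFQ A = PFQ B := by
  apply Multiset.rel_eq.mp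
  apply Multiset.rel_map.mpr
  exact h.mono (fun a _ b _ hab => Quotient.sound hab)

/-- Soundness: PFQ is invariant under TyEq. -/
lemma pfq_sound : ∀ {A B : Ty}, TyEq A B → PFQ A = PFQ B := by
  intro A B h
  induction h with
  | refl => rfl
  | symm _ ih => exact ih.symm
  | trans _ _ ih1 ih2 => exact ih1.trans ih2
  | @impCongr a a' b b' ha hb iha ihb =>
    apply pfq_eq_of_rel
    show Multiset.Rel TyEq ((PF b).map (addPrem a)) ((PF b').map (addPrem a'))
    apply Multiset.rel_map.mpr
    exact (rel_of_pfq_eq ihb).mono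
      (fun t htm t' htm' htt' =>
        addPrem_congr_s9 (PF_prime_s9 _ _ htm) (PF_prime_s9 _ _ htm') ha htt')
  | @conjCongr a a' b b' ha hb iha ihb =>
    show ((PF a + PF b).map _) = ((PF a' + PF b').map _)
    simp only [Multiset.map_add]
    exact congrArg₂ (· + ·) iha ihb
  | comm a b =>
    show ((PF a + PF b).map _) = ((PF b + PF a).map _)
    rw [add_comm]
  | assoc a b c =>
    show ((PF a + (PF b + PF c)).map _) = ((PF a + PF b + PF c).map _)
    rw [add_assoc]
  | dist a b c =>
    show (((PF b + PF c).map (addPrem a)).map _) = _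
    show _ = (((PF b).map (addPrem a) + (PF c).map (addPrem a)).map _)
    rw [Multiset.map_add]
  | curry a b c =>
    apply pfq_eq_of_rel
    show Multiset.Rel TyEq ((PF c).map (addPrem (.conj a b)))
      (((PF c).map (addPrem b)).map (addPrem a))
    rw [Multiset.map_map]
    apply Multiset.rel_map.mpr
    apply Multiset.rel_eq_refl.mono
    rintro t htm _ _ rfl
    rcases PF_prime_s9 _ _ htm with rfl | ⟨d, rfl⟩
    · exact .refl _
    · exact .impCongr ((TyEq.assoc a b d).symm) (.refl _)

/-- Fold a nonempty list of types into a conjunction. -/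
def lconj : List Ty → Ty
  | [] => .tau
  | [a] => a
  | a :: b :: l => .conj a (lconj (b :: l))

lemma lconj_cons {a : Ty} {l : List Ty} (h : l ≠ []) :
    lconj (a :: l) = .conj a (lconj l) := by
  cases l with
  | nil => exact absurd rfl h
  | cons b l => rfl

lemma lconj_forall₂ : ∀ {l1 l2 : List Ty}, List.Forall₂ TyEq l1 l2 →
    TyEq (lconj l1) (lconj l2) := by
  intro l1 l2 h
  induction h with
  | nil => exact .refl _
  | @cons a b l1 l2 hab h ih =>
    cases l1 with
    | nil => cases h; exact hab
    | cons c l1 =>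
      cases l2 with
      | nil => cases h
      | cons d l2 =>
        rw [lconj_cons (l := c :: l1) (by simp), lconj_cons (l := d :: l2) (by simp)]
        exact .conjCongr hab ih

lemma lconj_perm : ∀ {l1 l2 : List Ty}, l1.Perm l2 →
    TyEq (lconj l1) (lconj l2) := by
  intro l1 l2 h
  induction h with
  | nil => exact .refl _
  | @cons a l1 l2 h ih =>
    cases l1 with
    | nil => cases h.symm.eq_nil; exact .refl _
    | cons b l1 =>
      have h2 : l2 ≠ [] := by
        intro hn; rw [hn] at h; exact absurd h.eq_nil (by simp)
      rw [lconj_cons (l := b :: l1) (by simp), lconj_cons (l := l2) h2]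
      exact .conjCongr (.refl _) ih
  | @swap a b l =>
    cases l with
    | nil => exact .comm b a
    | cons c l =>
      rw [lconj_cons (l := a :: c :: l) (by simp), lconj_cons (l := b :: c :: l) (by simp),
        lconj_cons (l := c :: l) (by simp)]
      exact (TyEq.assoc b a (lconj (c :: l))).trans
        ((TyEq.conjCongr (.comm b a) (.refl _)).trans
          (TyEq.assoc a b (lconj (c :: l))).symm)
  | trans _ _ ih1 ih2 => exact ih1.trans ih2

lemma lconj_append : ∀ {l1 l2 : List Ty}, l1 ≠ [] → l2 ≠ [] →
    TyEq (lconj (l1 ++ l2)) (.conj (lconj l1) (lconj l2)) := by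
  intro l1
  induction l1 with
  | nil => intro l2 h; exact absurd rfl h
  | cons a l1 ih =>
    intro l2 _ h2
    cases l1 with
    | nil => rw [List.singleton_append, lconj_cons h2]; exact .refl _
    | cons b l1 =>
      rw [List.cons_append, lconj_cons (l := (b :: l1) ++ l2) (by simp),
        lconj_cons (l := b :: l1) (by simp)]
      exact ((TyEq.conjCongr (.refl a) (ih (by simp) h2)).trans
        (TyEq.assoc a (lconj (b :: l1)) (lconj l2)))

lemma lconj_map_addPrem (a : Ty) : ∀ {l : List Ty}, l ≠ [] →
    (∀ t ∈ l, PrimeShape t) →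
    TyEq (.imp a (lconj l)) (lconj (l.map (addPrem a))) := by
  intro l
  induction l with
  | nil => intro h; exact absurd rfl h
  | cons t l ih =>
    intro _ hp
    cases l with
    | nil =>
      exact (addPrem_eq_imp (hp t (by simp))).symm
    | cons u l =>
      rw [lconj_cons (l := u :: l) (by simp), List.map_cons,
        lconj_cons (l := List.map (addPrem a) (u :: l)) (by simp)]
      exact (TyEq.dist a t (lconj (u :: l))).trans
        (.conjCongr (addPrem_eq_imp (hp t (by simp))).symm
          (ih (by simp) (fun v hv => hp v (by simp [hv]))))

/-- List version of PF. -/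
def PFL : Ty → List Ty
  | .tau => [.tau]
  | .imp a b => (PFL b).map (addPrem a)
  | .conj a b => PFL a ++ PFL b

lemma PFL_ne_nil : ∀ A : Ty, PFL A ≠ [] := by
  intro A
  induction A with
  | tau => simp [PFL]
  | imp a b iha ihb => simp [PFL, ihb]
  | conj a b iha ihb => simp [PFL, iha]

lemma PFL_coe : ∀ A : Ty, (↑(PFL A) : Multiset Ty) = PF A := by
  intro A
  induction A with
  | tau => rfl
  | imp a b iha ihb =>
    show (↑((PFL b).map (addPrem a)) : Multiset Ty) = (PF b).map (addPrem a)
    rw [← ihb, Multiset.map_coe]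
  | conj a b iha ihb =>
    show (↑(PFL a ++ PFL b) : Multiset Ty) = PF a + PF b
    rw [← iha, ← ihb]; rfl

lemma PFL_prime (A : Ty) (t : Ty) (ht : t ∈ PFL A) : PrimeShape t :=
  PF_prime_s9 A t (by rw [← PFL_coe]; exact_mod_cast ht)

lemma ty_eq_lconj_PFL : ∀ A : Ty, TyEq A (lconj (PFL A)) := by
  intro A
  induction A with
  | tau => exact .refl _
  | imp a b iha ihb =>
    exact (TyEq.impCongr (.refl a) ihb).trans
      (lconj_map_addPrem a (PFL_ne_nil b) (PFL_prime b))
  | conj a b iha ihb =>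
    exact (TyEq.conjCongr iha ihb).trans
      (lconj_append (PFL_ne_nil a) (PFL_ne_nil b)).symm

lemma rel_to_forall₂ : ∀ (l1 : List Ty) (t : Multiset Ty),
    Multiset.Rel TyEq ↑l1 t → ∃ l2 : List Ty, t = ↑l2 ∧ List.Forall₂ TyEq l1 l2 := by
  intro l1
  induction l1 with
  | nil =>
    intro t h
    rw [show ((↑([] : List Ty)) : Multiset Ty) = 0 from rfl, Multiset.rel_zero_left] at h
    exact ⟨[], h, .nil⟩
  | cons a l1 ih =>
    intro t h
    rw [show ((↑(a :: l1) : Multiset Ty)) = a ::ₘ ↑l1 from rfl,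
      Multiset.rel_cons_left] at h
    obtain ⟨b, t', hab, hrel, rfl⟩ := h
    obtain ⟨l2, rfl, hf⟩ := ih t' hrel
    exact ⟨b :: l2, rfl, .cons hab hf⟩

lemma ty_eq_of_rel {B C : Ty} (h : Multiset.Rel TyEq (PF B) (PF C)) : TyEq B C := by
  rw [← PFL_coe B] at h
  obtain ⟨l2, hl2, hf⟩ := rel_to_forall₂ (PFL B) (PF C) h
  have hperm : l2.Perm (PFL C) := by
    rw [← Multiset.coe_eq_coe, ← hl2, PFL_coe]
  exact ((ty_eq_lconj_PFL B).trans
    ((lconj_forall₂ hf).trans (lconj_perm hperm))).trans (ty_eq_lconj_PFL C).symm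

/-- Lemma 7: left cancellation of conjunction. -/
theorem conj_cancel (A B C : Ty) (h : TyEq (.conj A B) (.conj A C)) :
    TyEq B C := by
  have hq := pfq_sound h
  have hq' : PFQ A + PFQ B = PFQ A + PFQ C := by
    have e1 : PFQ (.conj A B) = PFQ A + PFQ B := by
      show ((PF A + PF B).map _) = _; rw [Multiset.map_add]; rfl
    have e2 : PFQ (.conj A C) = PFQ A + PFQ C := by
      show ((PF A + PF C).map _) = _; rw [Multiset.map_add]; rfl
    rw [← e1, ← e2, hq]
  have : PFQ B = PFQ C := add_left_cancel hq'
  exact ty_eq_of_rel (rel_of_pfq_eq this)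
end

section
/- Unicity of types in System I-η: if r : A and r : B are derivable, then A ≡ B. -/
/-- Terms: r ::= x | λx^A.r | r r | r×r | π_A(r).  Variables are natural
numbers; a global assignment `vt : ℕ → Ty` gives each variable its intrinsic
type, so `x ∈ V_A` is rendered as `TyEq (vt x) A` (the partition respects ≡). -/
inductive Tm : Type
  | var : ℕ → Tm
  | lam : Ty → ℕ → Tm → Tm
  | app : Tm → Tm → Tm
  | prod : Tm → Tm → Tm
  | proj : Ty → Tm → Tm
  deriving DecidableEq

/-- Typing judgment of System I-η. -/
inductive HasTy (vt : ℕ → Ty) : Tm → Ty → Prop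
  | var {n A} : TyEq (vt n) A → HasTy vt (.var n) A
  | equiv {r A B} : HasTy vt r A → TyEq A B → HasTy vt r B
  | lam {A n r B} : TyEq (vt n) A → HasTy vt r B → HasTy vt (.lam A n r) (.imp A B)
  | app {r s A B} : HasTy vt r (.imp A B) → HasTy vt s A → HasTy vt (.app r s) B
  | prod {r s A B} : HasTy vt r A → HasTy vt s B → HasTy vt (.prod r s) (.conj A B)
  | proj {r A B} : HasTy vt r (.conj A B) → HasTy vt (.proj A r) A

def enc : Ty → ℕ
  | .tau => 0
  | .imp a b => 3 * Nat.pair (enc a) (enc b) + 1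
  | .conj a b => 3 * Nat.pair (enc a) (enc b) + 2

lemma enc_inj : Function.Injective enc := by
  intro a
  induction a with
  | tau => intro b h; cases b <;> simp [enc] at h ⊢
  | imp a1 a2 ih1 ih2 =>
    intro b h
    cases b with
    | tau => simp [enc] at h
    | imp b1 b2 =>
      simp only [enc] at h
      have hp : Nat.pair (enc a1) (enc a2) = Nat.pair (enc b1) (enc b2) := by omega
      have := Nat.pair_eq_pair.mp hp
      rw [ih1 this.1, ih2 this.2]
    | conj b1 b2 => simp only [enc] at h; omega
  | conj a1 a2 ih1 ih2 =>
    intro b h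
    cases b with
    | tau => simp [enc] at h
    | imp b1 b2 => simp only [enc] at h; omega
    | conj b1 b2 =>
      simp only [enc] at h
      have hp : Nat.pair (enc a1) (enc a2) = Nat.pair (enc b1) (enc b2) := by omega
      have := Nat.pair_eq_pair.mp hp
      rw [ih1 this.1, ih2 this.2]

def TR (a b : Ty) : Prop := enc a ≤ enc b
instance : DecidableRel TR := fun _ _ => Nat.decLe _ _
instance : IsTrans Ty TR := ⟨fun _ _ _ => Nat.le_trans⟩
instance : IsAntisymm Ty TR := ⟨fun _ _ h1 h2 => enc_inj (Nat.le_antisymm h1 h2)⟩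
instance : IsTotal Ty TR := ⟨fun _ _ => Nat.le_total _ _⟩

def sortL (m : Multiset Ty) : List Ty := m.sort TR

lemma coe_sortL (m : Multiset Ty) : (sortL m : Multiset Ty) = m := Multiset.sort_eq _ _

lemma mem_sortL {p : Ty} {m : Multiset Ty} : p ∈ sortL m ↔ p ∈ m := Multiset.mem_sort _

def mkConj : List Ty → Ty
  | [] => .tau
  | [x] => x
  | x :: y :: ys => .conj x (mkConj (y :: ys))

lemma mkConj_cons (x : Ty) {l : List Ty} (h : l ≠ []) :
    mkConj (x :: l) = .conj x (mkConj l) := by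
  cases l with
  | nil => exact absurd rfl h
  | cons y ys => rfl

def unconj : Ty → Multiset Ty
  | .conj a b => unconj a + unconj b
  | t => {t}

def prems : Ty → Multiset Ty
  | .imp c _ => unconj c
  | _ => 0

def mkPrime (m : Multiset Ty) : Ty :=
  if m = 0 then .tau else .imp (mkConj (sortL m)) .tau

def aP (m : Multiset Ty) (p : Ty) : Ty := mkPrime (m + prems p)

def pf : Ty → Multiset Ty
  | .tau => {.tau}
  | .imp a b => (pf b).map (aP (pf a))
  | .conj a b => pf a + pf b

def nf (A : Ty) : Ty := mkConj (sortL (pf A))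

inductive CP : Ty → Prop
  | tau : CP .tau
  | imp (m : Multiset Ty) (h0 : m ≠ 0) (h : ∀ q ∈ m, CP q) : CP (.imp (mkConj (sortL m)) .tau)

def notConj : Ty → Prop
  | .conj _ _ => False
  | _ => True

lemma CP.notConj {p : Ty} (h : CP p) : notConj p := by cases h <;> trivial

lemma unconj_mkConj {l : List Ty} (h : l ≠ []) (hnc : ∀ x ∈ l, notConj x) :
    unconj (mkConj l) = (l : Multiset Ty) := by
  induction l with
  | nil => exact absurd rfl h
  | cons x xs ih =>
    cases xs with
    | nil =>
      have hx := hnc x (by simp)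
      cases x with
      | conj a b => exact hx.elim
      | tau => rfl
      | imp a b => rfl
    | cons y ys =>
      rw [mkConj_cons x (by simp), unconj]
      have hx := hnc x (by simp)
      have hux : unconj x = {x} := by
        cases x with
        | conj a b => exact hx.elim
        | tau => rfl
        | imp a b => rfl
      rw [hux, ih (by simp) (fun z hz => hnc z (by simp [hz]))]
      simp

lemma prems_mkPrime {m : Multiset Ty} (hnc : ∀ q ∈ m, notConj q) :
    prems (mkPrime m) = m := by
  by_cases h0 : m = 0
  · subst h0; simp [mkPrime, prems]
  · rw [mkPrime, if_neg h0, prems]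
    have hne : sortL m ≠ [] := by
      intro he
      apply h0
      have := coe_sortL m
      rw [he] at this
      simpa using this.symm
    rw [unconj_mkConj hne (fun x hx => hnc x (mem_sortL.mp hx)), coe_sortL]

lemma CP_prems {p : Ty} (h : CP p) : ∀ q ∈ prems p, CP q := by
  cases h with
  | tau => simp [prems]
  | imp m h0 hm =>
    intro q hq
    rw [prems] at hq
    have hne : sortL m ≠ [] := by
      intro he
      apply h0
      have := coe_sortL m
      rw [he] at this
      simpa using this.symm
    rw [unconj_mkConj hne (fun x hx => (hm x (mem_sortL.mp hx)).notConj), coe_sortL] at hq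
    exact hm q hq

lemma mkPrime_prems {p : Ty} (h : CP p) : mkPrime (prems p) = p := by
  cases h with
  | tau => simp [prems, mkPrime]
  | imp m h0 hm =>
    have hne : sortL m ≠ [] := by
      intro he
      apply h0
      have := coe_sortL m
      rw [he] at this
      simpa using this.symm
    rw [prems, unconj_mkConj hne (fun x hx => (hm x (mem_sortL.mp hx)).notConj), coe_sortL,
      mkPrime, if_neg h0]

lemma CP_mkPrime {m : Multiset Ty} (hm : ∀ q ∈ m, CP q) : CP (mkPrime m) := by
  by_cases h0 : m = 0
  · subst h0; simp [mkPrime]; exact CP.tau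
  · rw [mkPrime, if_neg h0]; exact CP.imp m h0 hm

lemma prems_aP {m : Multiset Ty} {p : Ty} (hm : ∀ q ∈ m, CP q) (hp : CP p) :
    prems (aP m p) = m + prems p := by
  apply prems_mkPrime
  intro q hq
  rcases Multiset.mem_add.mp hq with h | h
  · exact (hm q h).notConj
  · exact (CP_prems hp q h).notConj

lemma CP_aP {m : Multiset Ty} {p : Ty} (hm : ∀ q ∈ m, CP q) (hp : CP p) : CP (aP m p) := by
  apply CP_mkPrime
  intro q hq
  rcases Multiset.mem_add.mp hq with h | h
  · exact hm q h
  · exact CP_prems hp q h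

lemma pf_CP : ∀ {A p : Ty}, p ∈ pf A → CP p := by
  intro A
  induction A with
  | tau => intro p hp; rw [pf] at hp; simp at hp; subst hp; exact CP.tau
  | imp a b iha ihb =>
    intro p hp
    rw [pf] at hp
    obtain ⟨q, hq, rfl⟩ := Multiset.mem_map.mp hp
    exact CP_aP (fun r hr => iha hr) (ihb hq)
  | conj a b iha ihb =>
    intro p hp
    rw [pf] at hp
    rcases Multiset.mem_add.mp hp with h | h
    · exact iha h
    · exact ihb h

lemma pf_ne (A : Ty) : pf A ≠ 0 := by
  induction A with
  | tau => simp [pf]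
  | imp a b iha ihb => simp [pf, ihb]
  | conj a b iha ihb => simp [pf, iha]

lemma sortL_ne {m : Multiset Ty} (h : m ≠ 0) : sortL m ≠ [] := by
  intro he
  apply h
  have := coe_sortL m
  rw [he] at this
  simpa using this.symm

lemma sound {A B : Ty} (h : TyEq A B) : pf A = pf B := by
  induction h with
  | refl => rfl
  | symm _ ih => exact ih.symm
  | trans _ _ ih1 ih2 => exact ih1.trans ih2
  | impCongr _ _ ih1 ih2 => rw [pf, pf, ih1, ih2]
  | conjCongr _ _ ih1 ih2 => rw [pf, pf, ih1, ih2]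
  | comm A B => rw [pf, pf, add_comm]
  | assoc A B C => rw [pf, pf, pf, pf, add_assoc]
  | dist A B C => rw [pf, pf, pf, pf, pf, Multiset.map_add]
  | curry A B C =>
    rw [pf, pf, pf, pf, Multiset.map_map]
    apply Multiset.map_congr rfl
    intro p hp
    have hp' : CP p := pf_CP hp
    have hnc : ∀ q ∈ pf B + prems p, notConj q := by
      intro q hq
      rcases Multiset.mem_add.mp hq with h | h
      · exact (pf_CP h).notConj
      · exact (CP_prems hp' q h).notConj
    simp only [Function.comp_apply, aP]
    rw [prems_mkPrime hnc, ← add_assoc]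

lemma mkConj_perm : ∀ {l l' : List Ty}, l.Perm l' → TyEq (mkConj l) (mkConj l') := by
  intro l l' h
  induction h with
  | nil => exact TyEq.refl _
  | cons x h ih =>
    rename_i l₁ l₂
    cases l₁ with
    | nil =>
      have : l₂ = [] := h.symm.eq_nil
      subst this
      exact TyEq.refl _
    | cons y ys =>
      have h2 : l₂ ≠ [] := by
        intro he; subst he; exact absurd h.eq_nil (by simp)
      rw [mkConj_cons x (by simp), mkConj_cons x h2]
      exact TyEq.conjCongr (TyEq.refl x) ih
  | swap x y l =>
    cases l with
    | nil => exact TyEq.comm y x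
    | cons z zs =>
      rw [mkConj_cons y (by simp), mkConj_cons x (by simp),
        mkConj_cons x (by simp), mkConj_cons y (by simp)]
      exact ((TyEq.assoc y x (mkConj (z :: zs))).trans
        (TyEq.conjCongr (TyEq.comm y x) (TyEq.refl _))).trans
        (TyEq.assoc x y (mkConj (z :: zs))).symm
  | trans _ _ ih1 ih2 => exact ih1.trans ih2

lemma mkConj_append : ∀ {l1 l2 : List Ty}, l1 ≠ [] → l2 ≠ [] →
    TyEq (.conj (mkConj l1) (mkConj l2)) (mkConj (l1 ++ l2)) := by
  intro l1
  induction l1 with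
  | nil => intro l2 h1 _; exact absurd rfl h1
  | cons x xs ih =>
    intro l2 _ h2
    cases xs with
    | nil =>
      rw [List.singleton_append, mkConj_cons x h2]
      exact TyEq.refl _
    | cons y ys =>
      rw [mkConj_cons x (by simp), List.cons_append, mkConj_cons x (by simp)]
      exact (TyEq.assoc x (mkConj (y :: ys)) (mkConj l2)).symm.trans
        (TyEq.conjCongr (TyEq.refl x) (ih (by simp) h2))

lemma mkConj_map_congr {f g : Ty → Ty} : ∀ {l : List Ty}, (∀ x ∈ l, TyEq (f x) (g x)) →
    TyEq (mkConj (l.map f)) (mkConj (l.map g)) := by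
  intro l
  induction l with
  | nil => intro _; exact TyEq.refl _
  | cons x xs ih =>
    intro h
    cases xs with
    | nil => exact h x (by simp)
    | cons y ys =>
      have e1 : mkConj (List.map f (x :: y :: ys))
          = .conj (f x) (mkConj (List.map f (y :: ys))) := by
        rw [List.map_cons]; exact mkConj_cons _ (by simp)
      have e2 : mkConj (List.map g (x :: y :: ys))
          = .conj (g x) (mkConj (List.map g (y :: ys))) := by
        rw [List.map_cons]; exact mkConj_cons _ (by simp)
      rw [e1, e2]
      exact TyEq.conjCongr (h x (by simp)) (ih (fun z hz => h z (by simp [hz])))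

lemma imp_mkConj (a : Ty) : ∀ {l : List Ty}, l ≠ [] →
    TyEq (.imp a (mkConj l)) (mkConj (l.map (fun p => .imp a p))) := by
  intro l
  induction l with
  | nil => intro h; exact absurd rfl h
  | cons x xs ih =>
    intro _
    cases xs with
    | nil => exact TyEq.refl _
    | cons y ys =>
      have e1 : mkConj (List.map (fun p => Ty.imp a p) (x :: y :: ys))
          = .conj (.imp a x) (mkConj (List.map (fun p => Ty.imp a p) (y :: ys))) := by
        rw [List.map_cons]; exact mkConj_cons _ (by simp)
      rw [mkConj_cons x (by simp), e1]
      exact (TyEq.dist a x (mkConj (y :: ys))).trans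
        (TyEq.conjCongr (TyEq.refl _) (ih (by simp)))

lemma mkPrime_pf (a : Ty) : mkPrime (pf a) = .imp (nf a) .tau := by
  rw [mkPrime, if_neg (pf_ne a)]; rfl

lemma imp_aP {a p : Ty} (ha : TyEq a (nf a)) (hp : CP p) :
    TyEq (.imp a p) (aP (pf a) p) := by
  cases hp with
  | tau =>
    show TyEq _ (mkPrime (pf a + prems .tau))
    rw [show prems .tau = 0 from rfl, add_zero, mkPrime_pf]
    exact TyEq.impCongr ha (TyEq.refl _)
  | imp m h0 hm =>
    have hprem : prems (.imp (mkConj (sortL m)) .tau) = m := by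
      rw [prems, unconj_mkConj (sortL_ne h0)
        (fun x hx => (hm x (mem_sortL.mp hx)).notConj), coe_sortL]
    have hsum : pf a + m ≠ 0 := by simp [pf_ne a]
    show TyEq _ (mkPrime (pf a + prems _))
    rw [hprem, mkPrime, if_neg hsum]
    refine (TyEq.curry a (mkConj (sortL m)) .tau).symm.trans (TyEq.impCongr ?_ (TyEq.refl _))
    refine (TyEq.conjCongr ha (TyEq.refl _)).trans ?_
    refine (mkConj_append (sortL_ne (pf_ne a)) (sortL_ne h0)).trans ?_
    apply mkConj_perm
    rw [← Multiset.coe_eq_coe, ← Multiset.coe_add, coe_sortL, coe_sortL, coe_sortL]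

lemma complete : ∀ A : Ty, TyEq A (nf A) := by
  intro A
  induction A with
  | tau =>
    have : sortL ({Ty.tau} : Multiset Ty) = [Ty.tau] := by
      have := coe_sortL ({Ty.tau} : Multiset Ty)
      exact Multiset.coe_eq_singleton.mp this
    rw [nf, pf, this]
    exact TyEq.refl _
  | imp a b iha ihb =>
    refine (TyEq.impCongr (TyEq.refl a) ihb).trans ?_
    rw [nf]
    refine (imp_mkConj a (sortL_ne (pf_ne b))).trans ?_
    refine (mkConj_map_congr (fun p hp => imp_aP iha (pf_CP (mem_sortL.mp hp)))).trans ?_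
    rw [nf, pf]
    apply mkConj_perm
    rw [← Multiset.coe_eq_coe, ← Multiset.map_coe, coe_sortL, coe_sortL]
  | conj a b iha ihb =>
    refine (TyEq.conjCongr iha ihb).trans ?_
    rw [nf, nf, nf, pf]
    refine (mkConj_append (sortL_ne (pf_ne a)) (sortL_ne (pf_ne b))).trans ?_
    apply mkConj_perm
    rw [← Multiset.coe_eq_coe, ← Multiset.coe_add, coe_sortL, coe_sortL, coe_sortL]

lemma tyEq_of_pf {A B : Ty} (h : pf A = pf B) : TyEq A B := by
  refine (complete A).trans ?_
  rw [nf, h, ← nf]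
  exact (complete B).symm


lemma cancel {m : Multiset Ty} {B1 B2 : Ty} (hm : ∀ q ∈ m, CP q)
    (h : (pf B1).map (aP m) = (pf B2).map (aP m)) : pf B1 = pf B2 := by
  have h1 : (pf B1).map (fun p => m + prems p) = (pf B2).map (fun p => m + prems p) := by
    have h' := congrArg (Multiset.map prems) h
    rw [Multiset.map_map, Multiset.map_map] at h'
    have e1 : Multiset.map (prems ∘ aP m) (pf B1)
        = Multiset.map (fun p => m + prems p) (pf B1) :=
      Multiset.map_congr rfl (fun p hp => prems_aP hm (pf_CP hp))
    have e2 : Multiset.map (prems ∘ aP m) (pf B2)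
        = Multiset.map (fun p => m + prems p) (pf B2) :=
      Multiset.map_congr rfl (fun p hp => prems_aP hm (pf_CP hp))
    exact e1.symm.trans (h'.trans e2)
  have h2 : (pf B1).map prems = (pf B2).map prems := by
    apply Multiset.map_injective (add_right_injective m)
    rwa [Multiset.map_map, Multiset.map_map]
  have e1 : ((pf B1).map prems).map mkPrime = pf B1 := by
    rw [Multiset.map_map]
    exact (Multiset.map_congr rfl fun p hp => mkPrime_prems (pf_CP hp)).trans
      (Multiset.map_id _)
  have e2 : ((pf B2).map prems).map mkPrime = pf B2 := by
    rw [Multiset.map_map]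
    exact (Multiset.map_congr rfl fun p hp => mkPrime_prems (pf_CP hp)).trans
      (Multiset.map_id _)
  rw [← e1, ← e2, h2]

section Gen
variable {vt : ℕ → Ty}

lemma gen_var {t : Tm} {A : Ty} (h : HasTy vt t A) :
    ∀ n, t = .var n → TyEq (vt n) A := by
  induction h with
  | var h => intro n e; cases e; exact h
  | equiv _ hAB ih => intro n e; exact (ih n e).trans hAB
  | lam _ _ => intro n e; cases e
  | app _ _ => intro n e; cases e
  | prod _ _ => intro n e; cases e
  | proj _ => intro n e; cases e

lemma gen_lam {t : Tm} {T : Ty} (h : HasTy vt t T) :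
    ∀ C n r, t = .lam C n r → ∃ B, HasTy vt r B ∧ TyEq (.imp C B) T := by
  induction h with
  | var _ => intro C n r e; cases e
  | equiv _ hAB ih =>
    intro C n r e
    obtain ⟨B, hB, hE⟩ := ih C n r e
    exact ⟨B, hB, hE.trans hAB⟩
  | lam hv hr => intro C n r e; cases e; exact ⟨_, hr, TyEq.refl _⟩
  | app _ _ => intro C n r e; cases e
  | prod _ _ => intro C n r e; cases e
  | proj _ => intro C n r e; cases e

lemma gen_app {t : Tm} {T : Ty} (h : HasTy vt t T) :
    ∀ r s, t = .app r s →
      ∃ C B, HasTy vt r (.imp C B) ∧ HasTy vt s C ∧ TyEq B T := by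
  induction h with
  | var _ => intro r s e; cases e
  | equiv _ hAB ih =>
    intro r s e
    obtain ⟨C, B, hr, hs, hE⟩ := ih r s e
    exact ⟨C, B, hr, hs, hE.trans hAB⟩
  | lam _ _ => intro r s e; cases e
  | app hr hs => intro r s e; cases e; exact ⟨_, _, hr, hs, TyEq.refl _⟩
  | prod _ _ => intro r s e; cases e
  | proj _ => intro r s e; cases e

lemma gen_prod {t : Tm} {T : Ty} (h : HasTy vt t T) :
    ∀ r s, t = .prod r s →
      ∃ C D, HasTy vt r C ∧ HasTy vt s D ∧ TyEq (.conj C D) T := by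
  induction h with
  | var _ => intro r s e; cases e
  | equiv _ hAB ih =>
    intro r s e
    obtain ⟨C, D, hr, hs, hE⟩ := ih r s e
    exact ⟨C, D, hr, hs, hE.trans hAB⟩
  | lam _ _ => intro r s e; cases e
  | app _ _ => intro r s e; cases e
  | prod hr hs => intro r s e; cases e; exact ⟨_, _, hr, hs, TyEq.refl _⟩
  | proj _ => intro r s e; cases e

lemma gen_proj {t : Tm} {T : Ty} (h : HasTy vt t T) :
    ∀ C r, t = .proj C r → ∃ D, HasTy vt r (.conj C D) ∧ TyEq C T := by
  induction h with
  | var _ => intro C r e; cases e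
  | equiv _ hAB ih =>
    intro C r e
    obtain ⟨D, hr, hE⟩ := ih C r e
    exact ⟨D, hr, hE.trans hAB⟩
  | lam _ _ => intro C r e; cases e
  | app _ _ => intro C r e; cases e
  | prod _ _ => intro C r e; cases e
  | proj hr => intro C r e; cases e; exact ⟨_, hr, TyEq.refl _⟩

end Gen

/-- Unicity of types. -/
theorem unicity (vt : ℕ → Ty) (r : Tm) (A B : Ty)
    (hA : HasTy vt r A) (hB : HasTy vt r B) : TyEq A B := by
  induction r generalizing A B with
  | var n =>
    exact (gen_var hA n rfl).symm.trans (gen_var hB n rfl)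
  | lam C n r ih =>
    obtain ⟨B1, h1, e1⟩ := gen_lam hA C n r rfl
    obtain ⟨B2, h2, e2⟩ := gen_lam hB C n r rfl
    exact e1.symm.trans ((TyEq.impCongr (TyEq.refl C) (ih _ _ h1 h2)).trans e2)
  | app r s ihr ihs =>
    obtain ⟨C1, B1, hr1, hs1, e1⟩ := gen_app hA r s rfl
    obtain ⟨C2, B2, hr2, hs2, e2⟩ := gen_app hB r s rfl
    have hfun : TyEq (.imp C1 B1) (.imp C2 B2) := ihr _ _ hr1 hr2
    have harg : pf C1 = pf C2 := sound (ihs _ _ hs1 hs2)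
    have hmaps : (pf B1).map (aP (pf C1)) = (pf B2).map (aP (pf C1)) := by
      have := sound hfun
      rw [pf, pf] at this
      rw [this, harg]
    have hB12 : TyEq B1 B2 := tyEq_of_pf (cancel (fun q hq => pf_CP hq) hmaps)
    exact e1.symm.trans (hB12.trans e2)
  | prod r s ihr ihs =>
    obtain ⟨C1, D1, hr1, hs1, e1⟩ := gen_prod hA r s rfl
    obtain ⟨C2, D2, hr2, hs2, e2⟩ := gen_prod hB r s rfl
    exact e1.symm.trans ((TyEq.conjCongr (ihr _ _ hr1 hr2) (ihs _ _ hs1 hs2)).trans e2)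
  | proj C r ih =>
    obtain ⟨D1, hr1, e1⟩ := gen_proj hA C r rfl
    obtain ⟨D2, hr2, e2⟩ := gen_proj hB C r rfl
    exact e1.symm.trans e2
end

section
/- Generation lemma for abstraction: if λx^A.r : B is derivable, then there exists C with B ≡ A⇒C and r : C derivable. -/
/-- Generation lemma for abstraction. -/
theorem generation_lam (vt : ℕ → Ty) (A : Ty) (x : ℕ) (r : Tm) (B : Ty)
    (h : HasTy vt (.lam A x r) B) :
    ∃ C : Ty, TyEq B (.imp A C) ∧ HasTy vt r C := by
  generalize ht : Tm.lam A x r = t at h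
  induction h with
  | var _ => cases ht
  | app _ _ _ _ => cases ht
  | prod _ _ _ _ => cases ht
  | proj _ _ => cases ht
  | equiv _ e ih =>
      obtain ⟨C, hBC, hr⟩ := ih ht
      exact ⟨C, e.symm.trans hBC, hr⟩
  | lam hx hr _ =>
      cases ht
      exact ⟨_, TyEq.refl _, hr⟩
end

section
/- The measure M on terms is invariant under the structural equivalence ≅: if r ≅ s then M(r) = M(s). -/
/-- Structural equivalence ≅ on terms: smallest symmetric, contextually closed
relation with comm, asso, dist, curry. -/
inductive TEq : Tm → Tm → Prop
  | comm (r s) : TEq (.prod r s) (.prod s r)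
  | assoc (r s t) : TEq (.prod (.prod r s) t) (.prod r (.prod s t))
  | dist (A x r s) : TEq (.lam A x (.prod r s)) (.prod (.lam A x r) (.lam A x s))
  | curry (r s t) : TEq (.app (.app r s) t) (.app r (.prod s t))
  | symm {r s} : TEq r s → TEq s r
  | lamCongr {r s} (A x) : TEq r s → TEq (.lam A x r) (.lam A x s)
  | appLeft {r s} (t) : TEq r s → TEq (.app r t) (.app s t)
  | appRight {r s} (t) : TEq r s → TEq (.app t r) (.app t s)
  | prodLeft {r s} (t) : TEq r s → TEq (.prod r t) (.prod s t)
  | prodRight {r s} (t) : TEq r s → TEq (.prod t r) (.prod t s)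
  | projCongr {r s} (A) : TEq r s → TEq (.proj A r) (.proj A s)

/-- P counts the number of pairs in a term. -/
def Pm : Tm → ℕ
  | .var _ => 0
  | .lam _ _ r => Pm r
  | .app _ _ => 0
  | .prod r s => 1 + Pm r + Pm s
  | .proj _ _ => 0

/-- The measure M on terms. -/
def Mm : Tm → ℕ
  | .var _ => 1
  | .lam _ _ r => 1 + Mm r + Pm r
  | .app r s => 1 + Mm r + Mm s
  | .prod r s => 1 + Mm r + Mm s
  | .proj _ r => 1 + Mm r

lemma MP_eq_of_TEq (r s : Tm) (h : TEq r s) : Mm r = Mm s ∧ Pm r = Pm s := by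
  induction h with
  | comm r s => simp [Mm, Pm]; omega
  | assoc r s t => simp [Mm, Pm]; omega
  | dist A x r s => simp [Mm, Pm]; omega
  | curry r s t => simp [Mm, Pm]; omega
  | symm _ ih => omega
  | lamCongr A x _ ih => simp [Mm, Pm]; omega
  | appLeft t _ ih => simp [Mm, Pm]; omega
  | appRight t _ ih => simp [Mm, Pm]; omega
  | prodLeft t _ ih => simp [Mm, Pm]; omega
  | prodRight t _ ih => simp [Mm, Pm]; omega
  | projCongr A _ ih => simp [Mm, Pm]; omega

/-- Lemma: M is invariant under ≅. -/
theorem M_eq_of_TEq (r s : Tm) (h : TEq r s) : Mm r = Mm s := (MP_eq_of_TEq r s h).1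
end

section
/- For any term r, the equivalence class of r under the reflexive-transitive-symmetric closure of the structural equivalence ≅ is finite (up to α-equivalence). -/
/-- Size (number of nodes) of a term. -/
def sz : Tm → ℕ
  | .var _ => 1
  | .lam _ _ r => 1 + sz r
  | .app r s => 1 + sz r + sz s
  | .prod r s => 1 + sz r + sz s
  | .proj _ r => 1 + sz r

lemma sz_le_Mm (t : Tm) : sz t ≤ Mm t := by
  induction t <;> simp_all [sz, Mm] <;> omega

/-- Types occurring in a term. -/
def tys : Tm → Finset Ty
  | .var _ => ∅
  | .lam A _ r => insert A (tys r)
  | .app r s => tys r ∪ tys s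
  | .prod r s => tys r ∪ tys s
  | .proj A r => insert A (tys r)

/-- Variable names occurring in a term. -/
def vs : Tm → Finset ℕ
  | .var n => {n}
  | .lam _ x r => insert x (vs r)
  | .app r s => vs r ∪ vs s
  | .prod r s => vs r ∪ vs s
  | .proj _ r => vs r

lemma TEq.invariants {r s : Tm} (h : TEq r s) :
    Mm r = Mm s ∧ Pm r = Pm s ∧ tys r = tys s ∧ vs r = vs s := by
  induction h with
  | comm r s => refine ⟨?_, ?_, ?_, ?_⟩ <;> simp [Mm, Pm, tys, vs] <;>
      first | omega | exact Finset.union_comm _ _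
  | assoc r s t => refine ⟨?_, ?_, ?_, ?_⟩ <;> simp [Mm, Pm, tys, vs] <;>
      first | omega | exact (Finset.union_assoc _ _ _)
  | dist A x r s =>
      refine ⟨?_, ?_, ?_, ?_⟩ <;> simp [Mm, Pm, tys, vs] <;>
        first
          | omega
          | (ext a; simp [Finset.mem_insert, Finset.mem_union]; tauto)
  | curry r s t => refine ⟨?_, ?_, ?_, ?_⟩ <;> simp [Mm, Pm, tys, vs] <;>
      first | omega | exact (Finset.union_assoc _ _ _)
  | symm _ ih => exact ⟨ih.1.symm, ih.2.1.symm, ih.2.2.1.symm, ih.2.2.2.symm⟩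
  | lamCongr A x _ ih => simp [Mm, Pm, tys, vs, ih.1, ih.2.1, ih.2.2.1, ih.2.2.2]
  | appLeft t _ ih => simp [Mm, Pm, tys, vs, ih.1, ih.2.2.1, ih.2.2.2]
  | appRight t _ ih => simp [Mm, Pm, tys, vs, ih.1, ih.2.2.1, ih.2.2.2]
  | prodLeft t _ ih => simp [Mm, Pm, tys, vs, ih.1, ih.2.1, ih.2.2.1, ih.2.2.2]
  | prodRight t _ ih => simp [Mm, Pm, tys, vs, ih.1, ih.2.1, ih.2.2.1, ih.2.2.2]
  | projCongr A _ ih => simp [Mm, Pm, tys, vs, ih.1, ih.2.2.1, ih.2.2.2]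

/-- All terms of size ≤ n built from types in T and variables in V. -/
def allTm (T : Finset Ty) (V : Finset ℕ) : ℕ → Finset Tm
  | 0 => ∅
  | n + 1 =>
      V.image Tm.var ∪
      ((T ×ˢ V ×ˢ allTm T V n).image fun p => Tm.lam p.1 p.2.1 p.2.2) ∪
      ((allTm T V n ×ˢ allTm T V n).image fun p => Tm.app p.1 p.2) ∪
      ((allTm T V n ×ˢ allTm T V n).image fun p => Tm.prod p.1 p.2) ∪
      ((T ×ˢ allTm T V n).image fun p => Tm.proj p.1 p.2)

lemma mem_allTm (T : Finset Ty) (V : Finset ℕ) :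
    ∀ (s : Tm) (n : ℕ), sz s ≤ n → tys s ⊆ T → vs s ⊆ V → s ∈ allTm T V n := by
  intro s
  induction s with
  | var m =>
      rintro (_ | n) hn hT hV
      · simp [sz] at hn
      · simp only [allTm, Finset.mem_union, Finset.mem_image, Finset.mem_product]
        left; left; left; left
        exact ⟨m, hV (by simp [vs]), rfl⟩
  | lam A x r ih =>
      rintro (_ | n) hn hT hV
      · simp [sz] at hn
      · simp only [allTm, Finset.mem_union, Finset.mem_image, Finset.mem_product]
        left; left; left; right
        refine ⟨(A, x, r), ⟨hT (by simp [tys]), hV (by simp [vs]), ?_⟩, rfl⟩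
        exact ih n (by simp [sz] at hn; omega)
          (fun a ha => hT (by simp [tys]; right; exact ha))
          (fun a ha => hV (by simp [vs]; right; exact ha))
  | app r s ihr ihs =>
      rintro (_ | n) hn hT hV
      · simp [sz] at hn
      · simp only [allTm, Finset.mem_union, Finset.mem_image, Finset.mem_product]
        left; left; right
        refine ⟨(r, s), ⟨?_, ?_⟩, rfl⟩
        · exact ihr n (by simp [sz] at hn; omega)
            (fun a ha => hT (by simp [tys]; left; exact ha))
            (fun a ha => hV (by simp [vs]; left; exact ha))
        · exact ihs n (by simp [sz] at hn; omega)
            (fun a ha => hT (by simp [tys]; right; exact ha))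
            (fun a ha => hV (by simp [vs]; right; exact ha))
  | prod r s ihr ihs =>
      rintro (_ | n) hn hT hV
      · simp [sz] at hn
      · simp only [allTm, Finset.mem_union, Finset.mem_image, Finset.mem_product]
        left; right
        refine ⟨(r, s), ⟨?_, ?_⟩, rfl⟩
        · exact ihr n (by simp [sz] at hn; omega)
            (fun a ha => hT (by simp [tys]; left; exact ha))
            (fun a ha => hV (by simp [vs]; left; exact ha))
        · exact ihs n (by simp [sz] at hn; omega)
            (fun a ha => hT (by simp [tys]; right; exact ha))
            (fun a ha => hV (by simp [vs]; right; exact ha))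
  | proj A r ih =>
      rintro (_ | n) hn hT hV
      · simp [sz] at hn
      · simp only [allTm, Finset.mem_union, Finset.mem_image, Finset.mem_product]
        right
        refine ⟨(A, r), ⟨hT (by simp [tys]), ?_⟩, rfl⟩
        exact ih n (by simp [sz] at hn; omega)
          (fun a ha => hT (by simp [tys]; right; exact ha))
          (fun a ha => hV (by simp [vs]; exact ha))

lemma rtg_invariants {r s : Tm} (h : Relation.ReflTransGen TEq r s) :
    Mm r = Mm s ∧ tys r = tys s ∧ vs r = vs s := by
  induction h with
  | refl => exact ⟨rfl, rfl, rfl⟩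
  | tail _ hstep ih =>
      obtain ⟨h1, h2, h3, h4⟩ := hstep.invariants
      exact ⟨ih.1.trans h1, ih.2.1.trans h3, ih.2.2.trans h4⟩

/-- The equivalence class of any term under ≅* is finite.  (With our concrete
first-order representation, binder names are never renamed by ≅, so finiteness
on the nose implies finiteness modulo α-equivalence.) -/
theorem finite_class (r : Tm) :
    Set.Finite { s : Tm | Relation.ReflTransGen TEq r s } := by
  apply Set.Finite.subset (Finset.finite_toSet (allTm (tys r) (vs r) (Mm r)))
  intro s hs
  obtain ⟨h1, h2, h3⟩ := rtg_invariants hs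
  exact mem_allTm _ _ s (Mm r) (h1 ▸ sz_le_Mm s) (h2 ▸ le_refl _) (h3 ▸ le_refl _)
end

section
/- Subject reduction for the ζ-rule: if (r×s)t : A, then rt×st : A. -/
namespace SRZeta

/-- Prime factors: τ or c⇒τ. -/
def IsPrime (x : Ty) : Prop := x = .tau ∨ ∃ c, x = .imp c .tau

lemma pf_prime : ∀ A, ∀ x ∈ PF A, IsPrime x
  | .tau => by simp [PF, IsPrime]
  | .imp a b => by
      intro x hx
      simp only [PF, Multiset.mem_map] at hx
      obtain ⟨y, hy, rfl⟩ := hx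
      rcases pf_prime b y hy with h | ⟨c, rfl⟩
      · subst h; exact Or.inr ⟨a, rfl⟩
      · exact Or.inr ⟨_, rfl⟩
  | .conj a b => by
      intro x hx
      rcases Multiset.mem_add.1 hx with h | h
      exacts [pf_prime a x h, pf_prime b x h]

lemma pf_prime_eq {x : Ty} (h : IsPrime x) : PF x = {x} := by
  rcases h with rfl | ⟨c, rfl⟩ <;> simp [PF, addPrem]

lemma addPrem_imp {a x : Ty} (h : IsPrime x) : TyEq (addPrem a x) (.imp a x) := by
  rcases h with rfl | ⟨c, rfl⟩
  · exact .refl _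
  · exact .curry a c .tau

lemma addPrem_congr {a a' x y : Ty} (hx : IsPrime x) (hy : IsPrime y)
    (ha : TyEq a a') (hxy : TyEq x y) :
    TyEq (addPrem a x) (addPrem a' y) :=
  (addPrem_imp hx).trans ((TyEq.impCongr ha hxy).trans (addPrem_imp hy).symm)

lemma addPrem_curry {a b x : Ty} (h : IsPrime x) :
    TyEq (addPrem (.conj a b) x) (addPrem a (addPrem b x)) := by
  rcases h with rfl | ⟨c, rfl⟩
  · exact .refl _
  · exact .impCongr (TyEq.assoc a b c).symm (.refl _)

instance : IsTrans Ty TyEq := ⟨fun _ _ _ => .trans⟩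

lemma rel_tyeq_refl {s : Multiset Ty} : Multiset.Rel TyEq s s :=
  Multiset.rel_refl_of_refl_on fun x _ => .refl x

lemma rel_tyeq_symm {s t : Multiset Ty} (h : Multiset.Rel TyEq s t) :
    Multiset.Rel TyEq t s :=
  (Multiset.rel_flip.mpr h).mono fun _ _ _ _ hab => hab.symm

lemma rel_map_map {s : Multiset Ty} {f g : Ty → Ty}
    (h : ∀ x ∈ s, TyEq (f x) (g x)) :
    Multiset.Rel TyEq (s.map f) (s.map g) :=
  Multiset.rel_map.2 (Multiset.rel_refl_of_refl_on h)

lemma rel_map_congr {S T : Multiset Ty} {a a' : Ty}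
    (h : Multiset.Rel TyEq S T) (hS : ∀ x ∈ S, IsPrime x) (hT : ∀ y ∈ T, IsPrime y)
    (ha : TyEq a a') :
    Multiset.Rel TyEq (S.map (addPrem a)) (T.map (addPrem a')) :=
  Multiset.rel_map.2 (h.mono fun x hx y hy hxy => addPrem_congr (hS x hx) (hT y hy) ha hxy)

/-- Soundness: equivalent types have pointwise-equivalent prime factors. -/
lemma pf_sound {A B : Ty} (h : TyEq A B) : Multiset.Rel TyEq (PF A) (PF B) := by
  induction h with
  | refl A => exact rel_tyeq_refl
  | symm _ ih => exact rel_tyeq_symm ih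
  | trans _ _ ih1 ih2 => exact Multiset.Rel.trans TyEq ih1 ih2
  | impCongr h1 _ ih1 ih2 =>
      exact rel_map_congr ih2 (pf_prime _) (pf_prime _) h1
  | conjCongr _ _ ih1 ih2 => exact ih1.add ih2
  | comm A B => show Multiset.Rel TyEq (PF A + PF B) (PF B + PF A)
                rw [add_comm]; exact rel_tyeq_refl
  | assoc A B C => show Multiset.Rel TyEq (PF A + (PF B + PF C)) (PF A + PF B + PF C)
                   rw [add_assoc]; exact rel_tyeq_refl
  | dist A B C => simp only [PF, Multiset.map_add]; exact rel_tyeq_refl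
  | curry A B C =>
      simp only [PF, Multiset.map_map]
      exact rel_map_map fun x hx => addPrem_curry (pf_prime C x hx)

lemma pf_ne_zero : ∀ A, PF A ≠ 0
  | .tau => by simp [PF]
  | .imp a b => by
      simp only [PF, ne_eq, Multiset.map_eq_zero]
      exact pf_ne_zero b
  | .conj a b => by
      intro h
      exact pf_ne_zero a (Multiset.le_zero.1 (h ▸ Multiset.le_add_right _ _))

/-- Conjunction of a nonempty list of types. -/
def conjL : List Ty → Ty
  | [] => .tau
  | [a] => a
  | a :: b :: l => .conj a (conjL (b :: l))

lemma conjL_cons (a : Ty) {l : List Ty} (h : l ≠ []) :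
    conjL (a :: l) = .conj a (conjL l) := by
  cases l with
  | nil => exact absurd rfl h
  | cons b l => rfl

lemma conjL_perm : ∀ {l₁ l₂ : List Ty}, l₁.Perm l₂ → TyEq (conjL l₁) (conjL l₂) := by
  intro l₁ l₂ h
  induction h with
  | nil => exact .refl _
  | cons x h ih =>
      rename_i t₁ t₂
      cases t₁ with
      | nil => rw [h.nil_eq.symm]; exact .refl _
      | cons b l =>
        have h2 : t₂ ≠ [] := by
          intro he; subst he; exact absurd h.eq_nil (by simp)
        rw [conjL_cons x (by simp), conjL_cons x h2]
        exact .conjCongr (.refl x) ih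
  | swap x y l =>
      cases l with
      | nil => exact .comm y x
      | cons b l =>
        rw [conjL_cons y (by simp), conjL_cons x (by simp),
            conjL_cons x (by simp), conjL_cons y (by simp)]
        exact ((TyEq.assoc y x _).trans
          (.conjCongr (.comm y x) (.refl _))).trans (TyEq.assoc x y _).symm
  | trans _ _ ih1 ih2 => exact ih1.trans ih2

lemma conjL_append : ∀ {l₁ l₂ : List Ty}, l₁ ≠ [] → l₂ ≠ [] →
    TyEq (conjL (l₁ ++ l₂)) (.conj (conjL l₁) (conjL l₂)) := by
  intro l₁
  induction l₁ with
  | nil => intro l₂ h; exact absurd rfl h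
  | cons a l ih =>
      intro l₂ _ h₂
      cases l with
      | nil => rw [List.singleton_append, conjL_cons a h₂]; exact .refl _
      | cons b t =>
        have hne : (b :: t) ++ l₂ ≠ [] := by simp
        rw [List.cons_append, conjL_cons a hne, conjL_cons a (by simp)]
        exact (TyEq.conjCongr (.refl a) (ih (by simp) h₂)).trans (TyEq.assoc a _ _)

lemma pf_conjL_prime : ∀ {l : List Ty}, l ≠ [] → (∀ x ∈ l, IsPrime x) →
    PF (conjL l) = (l : Multiset Ty) := by
  intro l
  induction l with
  | nil => intro h; exact absurd rfl h
  | cons a l ih =>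
      intro _ hp
      cases l with
      | nil =>
        show PF a = _
        rw [pf_prime_eq (hp a (by simp))]
        rfl
      | cons b t =>
        rw [conjL_cons a (by simp)]
        show PF a + PF (conjL (b :: t)) = _
        rw [pf_prime_eq (hp a (by simp)), ih (by simp) (fun x hx => hp x (by simp [hx]))]
        simp [Multiset.singleton_add]

lemma imp_conjL : ∀ {l : List Ty} (a : Ty), l ≠ [] → (∀ x ∈ l, IsPrime x) →
    TyEq (.imp a (conjL l)) (conjL (l.map (addPrem a))) := by
  intro l
  induction l with
  | nil => intro a h; exact absurd rfl h
  | cons x l ih =>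
      intro a _ hp
      cases l with
      | nil => exact (addPrem_imp (hp x (by simp))).symm
      | cons b t =>
        rw [conjL_cons x (by simp), List.map_cons,
            conjL_cons (addPrem a x) (by simp)]
        exact (TyEq.dist a x _).trans
          (.conjCongr (addPrem_imp (hp x (by simp))).symm
            (ih a (by simp) (fun y hy => hp y (by simp [hy]))))

/-- Every type is equivalent to the conjunction of (a listing of) its prime factors. -/
lemma pf_repr : ∀ A : Ty, ∃ l : List Ty, l ≠ [] ∧ (l : Multiset Ty) = PF A ∧ TyEq A (conjL l)
  | .tau => ⟨[.tau], by simp, by simp [PF], .refl _⟩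
  | .imp a b => by
      obtain ⟨l, hne, hcoe, heq⟩ := pf_repr b
      refine ⟨l.map (addPrem a), by simp [hne], ?_, ?_⟩
      · show ((l.map (addPrem a) : List Ty) : Multiset Ty) = (PF b).map (addPrem a)
        rw [← hcoe]; simp
      · exact (TyEq.impCongr (.refl a) heq).trans
          (imp_conjL a hne (fun x hx => pf_prime b x (by rw [← hcoe]; exact Multiset.mem_coe.2 hx)))
  | .conj a b => by
      obtain ⟨la, hna, hca, hea⟩ := pf_repr a
      obtain ⟨lb, hnb, hcb, heb⟩ := pf_repr b
      refine ⟨la ++ lb, by simp [hna], ?_, ?_⟩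
      · show ((la ++ lb : List Ty) : Multiset Ty) = PF a + PF b
        rw [← hca, ← hcb]; simp
      · exact (TyEq.conjCongr hea heb).trans (conjL_append hna hnb).symm

lemma conjL_of_rel : ∀ (l₁ l₂ : List Ty),
    Multiset.Rel TyEq (l₁ : Multiset Ty) (l₂ : Multiset Ty) → l₁ ≠ [] →
    TyEq (conjL l₁) (conjL l₂) := by
  intro l₁
  induction l₁ with
  | nil => intro l₂ _ h; exact absurd rfl h
  | cons a l ih =>
      intro l₂ h _
      rw [← Multiset.cons_coe] at h
      obtain ⟨b, T', hab, hrel, hT⟩ := Multiset.rel_cons_left.1 h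
      have hbmem : b ∈ l₂ := by
        have : b ∈ (l₂ : Multiset Ty) := hT ▸ Multiset.mem_cons_self b T'
        exact Multiset.mem_coe.1 this
      have hperm : l₂.Perm (b :: l₂.erase b) := List.perm_cons_erase hbmem
      have hcoe : (l₂ : Multiset Ty) = b ::ₘ (l₂.erase b : Multiset Ty) := by
        rw [Multiset.coe_eq_coe.2 hperm, Multiset.cons_coe]
      have hT' : T' = (l₂.erase b : Multiset Ty) :=
        (Multiset.cons_inj_right b).1 (hT.symm.trans hcoe)
      cases l with
      | nil =>
        have : T' = 0 := Multiset.rel_zero_left.1 hrel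
        have he : l₂.erase b = [] := by
          rw [this] at hT'; exact_mod_cast (Multiset.coe_eq_zero _).1 hT'.symm
        have h2 : TyEq (conjL l₂) b := by
          have h3 := conjL_perm hperm
          rw [he] at h3
          exact h3
        exact hab.trans h2.symm
      | cons c t =>
        have hne : l₂.erase b ≠ [] := by
          intro he
          rw [he] at hT'
          simp only [Multiset.coe_nil] at hT'
          rw [hT'] at hrel
          have := Multiset.rel_zero_right.1 hrel
          simp at this
        rw [conjL_cons a (by simp)]
        refine (TyEq.conjCongr hab (ih (l₂.erase b) (hT' ▸ hrel) (by simp))).trans ?_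
        rw [← conjL_cons b hne]
        exact (conjL_perm hperm).symm

/-- Completeness: pointwise-equivalent prime factorizations give equivalent types. -/
lemma pf_complete {X Y : Ty} (h : Multiset.Rel TyEq (PF X) (PF Y)) : TyEq X Y := by
  obtain ⟨lX, hnX, hcX, heX⟩ := pf_repr X
  obtain ⟨lY, hnY, hcY, heY⟩ := pf_repr Y
  rw [← hcX, ← hcY] at h
  exact heX.trans ((conjL_of_rel lX lY h hnX).trans heY.symm)

/-- Splitting a mapped multiset. -/
lemma map_eq_add_split {f : Ty → Ty} :
    ∀ (s t₁ t₂ : Multiset Ty), s.map f = t₁ + t₂ →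
      ∃ s₁ s₂, s = s₁ + s₂ ∧ t₁ = s₁.map f ∧ t₂ = s₂.map f := by
  intro s
  induction s using Multiset.induction_on with
  | empty =>
      intro t₁ t₂ h
      simp only [Multiset.map_zero] at h
      refine ⟨0, 0, by simp, ?_, ?_⟩
      · have : t₁ = 0 := Multiset.le_zero.1 (h ▸ Multiset.le_add_right _ _)
        simp [this]
      · have : t₂ = 0 := Multiset.le_zero.1 (h ▸ Multiset.le_add_left _ _)
        simp [this]
  | cons a s ih =>
      intro t₁ t₂ h
      rw [Multiset.map_cons] at h
      have hmem : f a ∈ t₁ + t₂ := h ▸ Multiset.mem_cons_self _ _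
      rcases Multiset.mem_add.1 hmem with hm | hm
      · obtain ⟨E, hE⟩ : ∃ E, t₁ = f a ::ₘ E := ⟨_, (Multiset.cons_erase hm).symm⟩
        subst hE
        rw [Multiset.cons_add] at h
        have h2 : s.map f = E + t₂ := (Multiset.cons_inj_right (f a)).1 h
        obtain ⟨s₁, s₂, hs, h1, h2'⟩ := ih _ _ h2
        exact ⟨a ::ₘ s₁, s₂, by rw [hs, Multiset.cons_add],
          by rw [h1, Multiset.map_cons], h2'⟩
      · obtain ⟨E, hE⟩ : ∃ E, t₂ = f a ::ₘ E := ⟨_, (Multiset.cons_erase hm).symm⟩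
        subst hE
        rw [Multiset.add_cons] at h
        have h2 : s.map f = t₁ + E := (Multiset.cons_inj_right (f a)).1 h
        obtain ⟨s₁, s₂, hs, h1, h2'⟩ := ih _ _ h2
        exact ⟨s₁, a ::ₘ s₂, by rw [hs, Multiset.add_cons],
          h1, by rw [h2', Multiset.map_cons]⟩

/-- Key fact: if A₁ ∧ A₂ ≡ C ⇒ B then Aᵢ ≡ C ⇒ Bᵢ with B ≡ B₁ ∧ B₂. -/
lemma key {A₁ A₂ C B : Ty} (h : TyEq (.conj A₁ A₂) (.imp C B)) :
    ∃ B₁ B₂, TyEq A₁ (.imp C B₁) ∧ TyEq A₂ (.imp C B₂) ∧ TyEq B (.conj B₁ B₂) := by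
  have hr : Multiset.Rel TyEq (PF A₁ + PF A₂) ((PF B).map (addPrem C)) := pf_sound h
  obtain ⟨M₁, M₂, h₁, h₂, hM⟩ := Multiset.rel_add_left.1 hr
  obtain ⟨S₁, S₂, hS, hM₁, hM₂⟩ := map_eq_add_split (PF B) M₁ M₂ hM
  have hprime : ∀ i ∈ S₁ + S₂, IsPrime i := by rw [← hS]; exact pf_prime B
  have hS₁ne : S₁ ≠ 0 := by
    intro h0
    rw [h0, Multiset.map_zero] at hM₁
    rw [hM₁] at h₁
    exact pf_ne_zero A₁ (Multiset.rel_zero_right.1 h₁)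
  have hS₂ne : S₂ ≠ 0 := by
    intro h0
    rw [h0, Multiset.map_zero] at hM₂
    rw [hM₂] at h₂
    exact pf_ne_zero A₂ (Multiset.rel_zero_right.1 h₂)
  have hl₁ : S₁.toList ≠ [] := fun he => hS₁ne (Multiset.toList_eq_nil.1 he)
  have hl₂ : S₂.toList ≠ [] := fun he => hS₂ne (Multiset.toList_eq_nil.1 he)
  have hp₁ : ∀ x ∈ S₁.toList, IsPrime x := fun x hx =>
    hprime x (Multiset.mem_add.2 (Or.inl (Multiset.mem_toList.1 hx)))
  have hp₂ : ∀ x ∈ S₂.toList, IsPrime x := fun x hx =>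
    hprime x (Multiset.mem_add.2 (Or.inr (Multiset.mem_toList.1 hx)))
  refine ⟨conjL S₁.toList, conjL S₂.toList, ?_, ?_, ?_⟩
  · apply pf_complete
    show Multiset.Rel TyEq (PF A₁) ((PF (conjL S₁.toList)).map (addPrem C))
    rw [pf_conjL_prime hl₁ hp₁, Multiset.coe_toList, ← hM₁]
    exact h₁
  · apply pf_complete
    show Multiset.Rel TyEq (PF A₂) ((PF (conjL S₂.toList)).map (addPrem C))
    rw [pf_conjL_prime hl₂ hp₂, Multiset.coe_toList, ← hM₂]
    exact h₂
  · apply pf_complete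
    show Multiset.Rel TyEq (PF B) (PF (conjL S₁.toList) + PF (conjL S₂.toList))
    rw [pf_conjL_prime hl₁ hp₁, pf_conjL_prime hl₂ hp₂,
        Multiset.coe_toList, Multiset.coe_toList, ← hS]
    exact rel_tyeq_refl

lemma inv_app {vt : ℕ → Ty} {u : Tm} {A : Ty} (h : HasTy vt u A) :
    ∀ r s : Tm, u = .app r s →
      ∃ C B, HasTy vt r (.imp C B) ∧ HasTy vt s C ∧ TyEq B A := by
  induction h with
  | var _ => intro r s h; exact absurd h (by simp)
  | equiv _ h2 ih =>
      intro r s he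
      obtain ⟨C, B, h3, h4, h5⟩ := ih r s he
      exact ⟨C, B, h3, h4, h5.trans h2⟩
  | lam _ _ _ => intro r s h; exact absurd h (by simp)
  | app h1 h2 _ _ =>
      intro r s he
      injection he with e1 e2
      subst e1; subst e2
      exact ⟨_, _, h1, h2, .refl _⟩
  | prod _ _ _ _ => intro r s h; exact absurd h (by simp)
  | proj _ _ => intro r s h; exact absurd h (by simp)

lemma inv_prod {vt : ℕ → Ty} {u : Tm} {A : Ty} (h : HasTy vt u A) :
    ∀ r s : Tm, u = .prod r s →
      ∃ A₁ A₂, HasTy vt r A₁ ∧ HasTy vt s A₂ ∧ TyEq (.conj A₁ A₂) A := by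
  induction h with
  | var _ => intro r s h; exact absurd h (by simp)
  | equiv _ h2 ih =>
      intro r s he
      obtain ⟨A₁, A₂, h3, h4, h5⟩ := ih r s he
      exact ⟨A₁, A₂, h3, h4, h5.trans h2⟩
  | lam _ _ _ => intro r s h; exact absurd h (by simp)
  | app _ _ _ _ => intro r s h; exact absurd h (by simp)
  | prod h1 h2 _ _ =>
      intro r s he
      injection he with e1 e2
      subst e1; subst e2
      exact ⟨_, _, h1, h2, .refl _⟩
  | proj _ _ => intro r s h; exact absurd h (by simp)

end SRZeta

/-- Subject reduction for the ζ-rule. -/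
theorem sr_zeta (vt : ℕ → Ty) (r s t : Tm) (A : Ty)
    (h : HasTy vt (.app (.prod r s) t) A) :
    HasTy vt (.prod (.app r t) (.app s t)) A := by
  obtain ⟨C, B, hprod, ht, hBA⟩ := SRZeta.inv_app h _ _ rfl
  obtain ⟨A₁, A₂, hr, hs, hconj⟩ := SRZeta.inv_prod hprod _ _ rfl
  obtain ⟨B₁, B₂, e1, e2, e3⟩ := SRZeta.key hconj
  exact HasTy.equiv
    (HasTy.prod (HasTy.app (HasTy.equiv hr e1) ht) (HasTy.app (HasTy.equiv hs e2) ht))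
    (e3.symm.trans hBA)
end

section
/- If r and t are introductions (abstractions or products) and rs ≅* tu, then r ≅* t and s ≅* u. -/
/-- An introduction is an abstraction or a product. -/
def IsIntro : Tm → Prop
  | .lam _ _ _ => True
  | .prod _ _ => True
  | _ => False

/-! An application `a s₁ ⋯ sₙ` (with `a` not an application) has head `a` and argument tuple
`(⋯(s₁ × s₂) ⋯) × sₙ`. Each generating step of `≅` changes the head and the argument tuple only up
to `≅*`: in particular `curry` turns into `assoc` on tuples. Since an introduction is not an
application, `r s` has head `r` and argument tuple `s` when `r` is an introduction. -/

local infix:50 " ≅* " => Relation.ReflTransGen TEq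

namespace Tm

def isApp : Tm → Bool
  | .app _ _ => true
  | _ => false

@[simp] theorem isApp_app (a b : Tm) : (app a b).isApp = true := rfl

def head : Tm → Tm
  | .app a _ => a.head
  | t => t

def args : Tm → Tm
  | .app a b => if a.isApp then .prod a.args b else b
  | t => t

theorem head_of_isApp_eq_false {a : Tm} (h : a.isApp = false) : a.head = a := by
  cases a <;> simp_all [head, isApp]

theorem isApp_eq_false_of_isIntro {a : Tm} (h : IsIntro a) : a.isApp = false := by
  cases a <;> simp_all [IsIntro, isApp]

end Tm

namespace TEq

open Relation Tm

instance : Std.Symm TEq := ⟨fun _ _ => TEq.symm⟩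

theorem rtg_prodLeft {a b : Tm} (t : Tm) (h : a ≅* b) : .prod a t ≅* .prod b t :=
  ReflTransGen.lift (fun x => prod x t) (fun _ _ => prodLeft t) _ _ h

theorem rtg_prodRight {a b : Tm} (t : Tm) (h : a ≅* b) : .prod t a ≅* .prod t b :=
  ReflTransGen.lift (prod t) (fun _ _ => prodRight t) _ _ h

theorem isApp_eq {a b : Tm} (h : TEq a b) : a.isApp = b.isApp := by
  induction h <;> simp_all [isApp]

theorem head_rtg {a b : Tm} (h : TEq a b) : a.head ≅* b.head := by
  induction h with
  | curry | appRight => exact .refl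
  | symm _ ih => exact Std.Symm.symm _ _ ih
  | @appLeft a a' _ h ih =>
    cases ha : a.isApp
    · rw [head, head, head_of_isApp_eq_false ha,
        head_of_isApp_eq_false (h.isApp_eq ▸ ha)]
      exact .single h
    · exact ih
  | comm r s => exact .single (comm r s)
  | assoc r s t => exact .single (assoc r s t)
  | dist A x r s => exact .single (dist A x r s)
  | lamCongr A x h => exact .single (lamCongr A x h)
  | prodLeft t h => exact .single (prodLeft t h)
  | prodRight t h => exact .single (prodRight t h)
  | projCongr A h => exact .single (projCongr A h)

theorem args_rtg {a b : Tm} (h : TEq a b) : a.args ≅* b.args := by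
  induction h with
  | @curry r _ _ =>
    cases hr : r.isApp
    · simpa [args, hr] using .refl
    · simpa [args, hr] using .single (assoc _ _ _)
  | symm _ ih => exact Std.Symm.symm _ _ ih
  | @appLeft a a' t h ih =>
    cases ha : a.isApp
    · simpa [args, ha, ← h.isApp_eq] using .refl
    · simpa [args, ha, ← h.isApp_eq] using rtg_prodLeft t ih
  | @appRight a a' t h =>
    cases ht : t.isApp
    · simpa [args, ht] using .single h
    · simpa [args, ht] using rtg_prodRight _ (.single h)
  | comm r s => exact .single (comm r s)
  | assoc r s t => exact .single (assoc r s t)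
  | dist A x r s => exact .single (dist A x r s)
  | lamCongr A x h => exact .single (lamCongr A x h)
  | prodLeft t h => exact .single (prodLeft t h)
  | prodRight t h => exact .single (prodRight t h)
  | projCongr A h => exact .single (projCongr A h)

end TEq

namespace Tm

open Relation

theorem rtg_head_of_rtg {a b : Tm} (h : a ≅* b) : a.head ≅* b.head :=
  ReflTransGen.lift' head (fun _ _ => TEq.head_rtg) _ _ h

theorem rtg_args_of_rtg {a b : Tm} (h : a ≅* b) : a.args ≅* b.args :=
  ReflTransGen.lift' args (fun _ _ => TEq.args_rtg) _ _ h

theorem head_app_of_isIntro {a : Tm} (b : Tm) (h : IsIntro a) : (app a b).head = a :=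
  head_of_isApp_eq_false (isApp_eq_false_of_isIntro h)

theorem args_app_of_isIntro {a : Tm} (b : Tm) (h : IsIntro a) : (app a b).args = b := by
  simp [args, isApp_eq_false_of_isIntro h]

end Tm

/-- Lemma: if r, t are introductions and rs ≅* tu then r ≅* t and s ≅* u. -/
theorem intro_app_eq_intro_app (r s t u : Tm)
    (hr : IsIntro r) (ht : IsIntro t)
    (h : Relation.ReflTransGen TEq (.app r s) (.app t u)) :
    Relation.ReflTransGen TEq r t ∧ Relation.ReflTransGen TEq s u := by
  have h_head := Tm.rtg_head_of_rtg h
  have h_args := Tm.rtg_args_of_rtg h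
  rw [Tm.head_app_of_isIntro s hr, Tm.head_app_of_isIntro u ht] at h_head
  rw [Tm.args_app_of_isIntro s hr, Tm.args_app_of_isIntro u ht] at h_args
  exact ⟨h_head, h_args⟩
end

section
/- Every ≅*-equivalent form of an abstraction λx^A.r is a product of abstractions: if λx^A.r ≅* s, then s = (λx^A.s₁)×⋯×(λx^A.sₙ) for some n ≥ 1 with r ≅* s₁×⋯×sₙ (for n=1, s = λx^A.s₁ with r ≅* s₁). -/
/-- `LamProd A x u s` : s is a product tree of abstractions λx^A.sᵢ whose
bodies form the product tree u of the same shape, i.e.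
s = (λx^A.s₁)×⋯×(λx^A.sₙ) with u = s₁×⋯×sₙ (arbitrary parenthesization). -/
inductive LamProd (A : Ty) (x : ℕ) : Tm → Tm → Prop
  | base (r) : LamProd A x r (.lam A x r)
  | prod {r₁ s₁ r₂ s₂} : LamProd A x r₁ s₁ → LamProd A x r₂ s₂ →
      LamProd A x (.prod r₁ r₂) (.prod s₁ s₂)

/-!
A product of abstractions `(λx^A.s₁)×⋯×(λx^A.sₙ)` stays one under every ≅-step: `comm` and
`assoc` rearrange the factors, `dist` splits or merges abstractions, a step inside a factor
`λx^A.sᵢ` is a step inside the body `sᵢ`, and `curry` and the congruences under application and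
projection never apply. In each case the bodies move by a ≅*-step. Because `TEq` is made symmetric by
a constructor of its own, the induction over a step has to carry both directions at once.
-/

open Relation

theorem TEq.reflTransGen_prodLeft {a b : Tm} (t : Tm) (h : ReflTransGen TEq a b) :
    ReflTransGen TEq (.prod a t) (.prod b t) :=
  h.lift (Tm.prod · t) fun _ _ => TEq.prodLeft t

theorem TEq.reflTransGen_prodRight {a b : Tm} (t : Tm) (h : ReflTransGen TEq a b) :
    ReflTransGen TEq (.prod t a) (.prod t b) :=
  h.lift (Tm.prod t ·) fun _ _ => TEq.prodRight t

namespace LamProd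

def Transfer (A : Ty) (x : ℕ) (s s' : Tm) : Prop :=
  ∀ u, LamProd A x u s → ∃ u', LamProd A x u' s' ∧ ReflTransGen TEq u u'

variable {A : Ty} {x : ℕ}

namespace Transfer

theorem refl (s : Tm) : Transfer A x s s := fun u hu => ⟨u, hu, .refl⟩

theorem trans {s₁ s₂ s₃ : Tm} (h₁₂ : Transfer A x s₁ s₂) (h₂₃ : Transfer A x s₂ s₃) :
    Transfer A x s₁ s₃ := fun u hu =>
  have ⟨u₂, hu₂, hr₂⟩ := h₁₂ u hu
  have ⟨u₃, hu₃, hr₃⟩ := h₂₃ u₂ hu₂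
  ⟨u₃, hu₃, hr₂.trans hr₃⟩

theorem of_app {a b s : Tm} : Transfer A x (.app a b) s := fun _ => nofun

theorem of_proj {a s : Tm} {B : Ty} : Transfer A x (.proj B a) s := fun _ => nofun

theorem prod {s₁ s₁' s₂ s₂' : Tm} (h₁ : Transfer A x s₁ s₁') (h₂ : Transfer A x s₂ s₂') :
    Transfer A x (.prod s₁ s₂) (.prod s₁' s₂') := by
  rintro _ (_ | ⟨hu₁, hu₂⟩)
  obtain ⟨u₁', hu₁', hr₁⟩ := h₁ _ hu₁
  obtain ⟨u₂', hu₂', hr₂⟩ := h₂ _ hu₂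
  exact ⟨_, hu₁'.prod hu₂', (TEq.reflTransGen_prodLeft _ hr₁).trans
    (TEq.reflTransGen_prodRight _ hr₂)⟩

theorem prod_comm (s₁ s₂ : Tm) : Transfer A x (.prod s₁ s₂) (.prod s₂ s₁) := by
  rintro _ (_ | ⟨hu₁, hu₂⟩)
  exact ⟨_, hu₂.prod hu₁, .single (TEq.comm _ _)⟩

theorem prod_assoc (s₁ s₂ s₃ : Tm) :
    Transfer A x (.prod (.prod s₁ s₂) s₃) (.prod s₁ (.prod s₂ s₃)) := by
  rintro _ (_ | ⟨_ | ⟨hu₁, hu₂⟩, hu₃⟩)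
  exact ⟨_, hu₁.prod (hu₂.prod hu₃), .single (TEq.assoc _ _ _)⟩

theorem prod_assoc_symm (s₁ s₂ s₃ : Tm) :
    Transfer A x (.prod s₁ (.prod s₂ s₃)) (.prod (.prod s₁ s₂) s₃) := by
  rintro _ (_ | ⟨hu₁, _ | ⟨hu₂, hu₃⟩⟩)
  exact ⟨_, (hu₁.prod hu₂).prod hu₃, .single (TEq.assoc _ _ _).symm⟩

theorem lam_prod (B : Ty) (y : ℕ) (r₁ r₂ : Tm) :
    Transfer A x (.lam B y (.prod r₁ r₂)) (.prod (.lam B y r₁) (.lam B y r₂)) := by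
  rintro _ ⟨⟩
  exact ⟨_, (base r₁).prod (base r₂), .refl⟩

theorem prod_lam (B : Ty) (y : ℕ) (r₁ r₂ : Tm) :
    Transfer A x (.prod (.lam B y r₁) (.lam B y r₂)) (.lam B y (.prod r₁ r₂)) := by
  rintro _ (_ | ⟨⟨⟩, ⟨⟩⟩)
  exact ⟨_, base _, .refl⟩

theorem lam {r r' : Tm} (B : Ty) (y : ℕ) (h : TEq r r') :
    Transfer A x (.lam B y r) (.lam B y r') := by
  rintro _ ⟨⟩
  exact ⟨_, base _, .single h⟩

theorem of_teq {s s' : Tm} (h : TEq s s') : Transfer A x s s' ∧ Transfer A x s' s := by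
  induction h with
  | comm s₁ s₂ => exact ⟨prod_comm s₁ s₂, prod_comm s₂ s₁⟩
  | assoc s₁ s₂ s₃ => exact ⟨prod_assoc s₁ s₂ s₃, prod_assoc_symm s₁ s₂ s₃⟩
  | dist B y r₁ r₂ => exact ⟨lam_prod B y r₁ r₂, prod_lam B y r₁ r₂⟩
  | curry => exact ⟨of_app, of_app⟩
  | symm _ ih => exact ih.symm
  | lamCongr B y h => exact ⟨lam B y h, lam B y h.symm⟩
  | appLeft => exact ⟨of_app, of_app⟩
  | appRight => exact ⟨of_app, of_app⟩
  | prodLeft t _ ih => exact ⟨ih.1.prod (refl t), ih.2.prod (refl t)⟩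
  | prodRight t _ ih => exact ⟨(refl t).prod ih.1, (refl t).prod ih.2⟩
  | projCongr => exact ⟨of_proj, of_proj⟩

theorem of_reflTransGen {s s' : Tm} (h : ReflTransGen TEq s s') : Transfer A x s s' := by
  induction h with
  | refl => exact refl _
  | tail _ hstep ih => exact ih.trans (of_teq hstep).1

end Transfer

end LamProd

/-- Every ≅*-equivalent form of an abstraction is a product of abstractions
(on the same binder) whose bodies form a product ≅*-equivalent to the body. -/
theorem lam_class (A : Ty) (x : ℕ) (r s : Tm)
    (h : Relation.ReflTransGen TEq (.lam A x r) s) :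
    ∃ u : Tm, LamProd A x u s ∧ Relation.ReflTransGen TEq r u :=
  LamProd.Transfer.of_reflTransGen h r (.base r)
end
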